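/- arXiv:2009.02867 — 8 statements merged into one kernel-verified Lean document; each statement's English description precedes it below -/
import Mathlib

section
/- Suppose the continuous trajectory x : [0,∞) → ℝ^d persistently excites the set Ω ⊆ ℝ^d in the sense PE1 with constants T₀, γ, δ, Δ > 0. Then x persistently excites Ω in the sense PE2; explicitly, for every t ≥ T₀ and every g ∈ H, ∫_t^{t+Δ+δ} ⟪k(x(τ)), g⟫_H² dτ ≥ (γ²/δ) ‖P_Ω g‖_H². -/
open scoped RealInnerProductSpace
open Filter MeasureTheory

/-- The orthogonal projection of `g` onto the closed linear span of `{k y : y ∈ Ω}`. -/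
noncomputable def closedSpanProj {H : Type*} [NormedAddCommGroup H] [InnerProductSpace ℝ H]
    [CompleteSpace H] {d : ℕ} (k : EuclideanSpace ℝ (Fin d) → H)
    (Ω : Set (EuclideanSpace ℝ (Fin d))) (g : H) : H :=
  haveI : CompleteSpace ((Submodule.span ℝ (k '' Ω)).topologicalClosure) :=
    (Submodule.isClosed_topologicalClosure _).completeSpace_coe
  (Submodule.orthogonalProjectionOnto ((Submodule.span ℝ (k '' Ω)).topologicalClosure) g : H)

/-! The window `[s, s + δ]` supplied by PE1 lies inside `[t, t + Δ + δ]`. By Cauchy–Schwarz on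
that window, `(γ ‖P_Ω g‖)² ≤ (∫_s^{s+δ} ⟪k(x τ), g⟫)² ≤ δ ∫_s^{s+δ} ⟪k(x τ), g⟫²`, and enlarging
the window to `[t, t + Δ + δ]` only increases the integral of the nonnegative integrand. -/

theorem sq_intervalIntegral_le_mul_intervalIntegral_sq {f : ℝ → ℝ} {a b : ℝ} (hab : a ≤ b)
    (hf : IntervalIntegrable f volume a b)
    (hf2 : IntervalIntegrable (fun τ ↦ f τ ^ 2) volume a b) :
    (∫ τ in a..b, f τ) ^ 2 ≤ (b - a) * ∫ τ in a..b, f τ ^ 2 := by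
  rcases hab.eq_or_lt with rfl | hab
  · simp
  have hL : 0 < b - a := sub_pos.2 hab
  -- Cauchy–Schwarz against the constant `1` is Jensen's inequality for `x ↦ x²`.
  have hjensen : (⨍ τ in Set.Ioc a b, f τ) ^ 2 ≤ ⨍ τ in Set.Ioc a b, f τ ^ 2 :=
    even_two.convexOn_pow.map_set_average_le (continuous_pow 2).continuousOn isClosed_univ
      (by simp [hab]) (by simp) (by simp) hf.1 hf2.1
  rw [setAverage_eq, setAverage_eq, Real.volume_real_Ioc_of_le hab.le, smul_eq_mul, smul_eq_mul,
    ← intervalIntegral.integral_of_le hab.le, ← intervalIntegral.integral_of_le hab.le] at hjensen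
  calc (∫ τ in a..b, f τ) ^ 2 = (b - a) ^ 2 * ((b - a)⁻¹ * ∫ τ in a..b, f τ) ^ 2 := by
        field_simp
    _ ≤ (b - a) ^ 2 * ((b - a)⁻¹ * ∫ τ in a..b, f τ ^ 2) := by gcongr
    _ = (b - a) * ∫ τ in a..b, f τ ^ 2 := by field_simp

theorem pe1_implies_pe2_general {H : Type*} [NormedAddCommGroup H] [InnerProductSpace ℝ H]
    [CompleteSpace H] {d : ℕ} (k : EuclideanSpace ℝ (Fin d) → H) (hk : Continuous k)
    (Ω : Set (EuclideanSpace ℝ (Fin d)))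
    (x : ℝ → EuclideanSpace ℝ (Fin d)) (hx : Continuous x)
    (T₀ γ δ Δ : ℝ) (hγ : 0 < γ) (hδ : 0 < δ)
    (hPE1 : ∀ t, T₀ ≤ t → ∀ g : H, ∃ s ∈ Set.Icc t (t + Δ),
      γ * ‖closedSpanProj k Ω g‖ ≤ |(∫ τ in s..(s + δ), ⟪k (x τ), g⟫)|) :
    ∀ t, T₀ ≤ t → ∀ g : H,
      (γ ^ 2 / δ) * ‖closedSpanProj k Ω g‖ ^ 2 ≤
        ∫ τ in t..(t + Δ + δ), (⟪k (x τ), g⟫) ^ 2 := by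
  intro t ht g
  obtain ⟨s, ⟨hts, hst⟩, hexcite⟩ := hPE1 t ht g
  have hf : Continuous fun τ ↦ ⟪k (x τ), g⟫ := (hk.comp hx).inner continuous_const
  have hcs := sq_intervalIntegral_le_mul_intervalIntegral_sq (le_add_of_nonneg_right hδ.le)
    (hf.intervalIntegrable s (s + δ)) ((hf.pow 2).intervalIntegrable s (s + δ))
  rw [add_sub_cancel_left] at hcs
  calc (γ ^ 2 / δ) * ‖closedSpanProj k Ω g‖ ^ 2 = (γ * ‖closedSpanProj k Ω g‖) ^ 2 / δ := by ring
    _ ≤ (∫ τ in s..(s + δ), ⟪k (x τ), g⟫) ^ 2 / δ := by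
        rw [← sq_abs (∫ τ in s..(s + δ), ⟪k (x τ), g⟫)]
        gcongr
    _ ≤ ∫ τ in s..(s + δ), ⟪k (x τ), g⟫ ^ 2 := by rwa [div_le_iff₀' hδ]
    _ ≤ ∫ τ in t..(t + Δ + δ), ⟪k (x τ), g⟫ ^ 2 :=
        intervalIntegral.integral_mono_interval hts (by linarith) (by linarith)
          (.of_forall fun τ ↦ sq_nonneg _) ((hf.pow 2).intervalIntegrable _ _)

/-- PE1 (with explicit constants) implies PE2, with the explicit estimate
`∫_t^{t+Δ+δ} ⟪k (x τ), g⟫² dτ ≥ (γ²/δ) ‖P_Ω g‖²`. -/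
theorem pe1_implies_pe2 {H : Type*} [NormedAddCommGroup H] [InnerProductSpace ℝ H]
    [CompleteSpace H] {d : ℕ} (k : EuclideanSpace ℝ (Fin d) → H) (hk : Continuous k)
    (Ω : Set (EuclideanSpace ℝ (Fin d)))
    (x : ℝ → EuclideanSpace ℝ (Fin d)) (hx : Continuous x)
    (T₀ γ δ Δ : ℝ) (hT₀ : 0 < T₀) (hγ : 0 < γ) (hδ : 0 < δ) (hΔ : 0 < Δ)
    (hPE1 : ∀ t, T₀ ≤ t → ∀ g : H, ∃ s ∈ Set.Icc t (t + Δ),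
      γ * ‖closedSpanProj k Ω g‖ ≤ |(∫ τ in s..(s + δ), ⟪k (x τ), g⟫)|) :
    ∀ t, T₀ ≤ t → ∀ g : H,
      (γ ^ 2 / δ) * ‖closedSpanProj k Ω g‖ ^ 2 ≤
        ∫ τ in t..(t + Δ + δ), (⟪k (x τ), g⟫) ^ 2 :=
  pe1_implies_pe2_general k hk Ω x hx T₀ γ δ Δ hγ hδ hPE1
end

section
/- Let Ω = {y_1, …, y_N} ⊂ ℝ^d be a finite set and suppose H = span{k(y_1), …, k(y_N)} (so that P_Ω is the identity on H). Assume the trajectory x : [0,∞) → ℝ^d is uniformly continuous with image contained in a compact set, and that the family of functions {t ↦ ⟪k(x(t)), g⟫_H : g ∈ H, ‖g‖_H = 1} is uniformly equicontinuous. If x persistently excites Ω in the sense PE2, then x persistently excites Ω in the sense PE1. -/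
/-!
Since the `k (y i)` span `H`, PE2 says that for every unit vector `u` the window integral of
`f_u²`, where `f_u τ = ⟪k (x τ), u⟫`, is at least `γ`, so `|f_u|` reaches `√(γ / Δ)` somewhere
in each window. Equicontinuity keeps `f_u` within `√(γ / Δ) / 2` of that value on an interval
whose length `δ` does not depend on `u`, so no cancellation can occur there and the integral over
it is at least `δ √(γ / Δ) / 2`. Homogeneity in `g` passes from unit vectors to all of `H`.
-/

open scoped RealInnerProductSpace
open Filter MeasureTheory

theorem closedSpanProj_eq_self {H : Type*} [NormedAddCommGroup H] [InnerProductSpace ℝ H]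
    [CompleteSpace H] {d : ℕ} (k : EuclideanSpace ℝ (Fin d) → H)
    {Ω : Set (EuclideanSpace ℝ (Fin d))} (hΩ : Submodule.span ℝ (k '' Ω) = ⊤) (g : H) :
    closedSpanProj k Ω g = g :=
  Submodule.starProjection_eq_self_iff.2 <|
    Submodule.le_topologicalClosure _ (hΩ ▸ Submodule.mem_top)

open Set intervalIntegral

theorem exists_mem_Icc_integral_le_sub_mul {f : ℝ → ℝ} {a b : ℝ} (hab : a ≤ b)
    (hf : ContinuousOn f (Icc a b)) : ∃ s ∈ Icc a b, ∫ x in a..b, f x ≤ (b - a) * f s := by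
  obtain ⟨s, hs, hmax⟩ := isCompact_Icc.exists_isMaxOn (nonempty_Icc.2 hab) hf
  refine ⟨s, hs, ?_⟩
  calc ∫ x in a..b, f x ≤ ∫ _ in a..b, f s :=
        integral_mono_on hab (hf.intervalIntegrable_of_Icc hab) intervalIntegrable_const hmax
    _ = (b - a) * f s := by simp

theorem sub_mul_le_abs_integral_of_abs_sub_le {f : ℝ → ℝ} {a b ε : ℝ} (hab : a ≤ b)
    (hf : IntervalIntegrable f volume a b) (h : ∀ x ∈ Ioc a b, |f x - f a| ≤ ε) :
    (b - a) * (|f a| - ε) ≤ |∫ x in a..b, f x| := by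
  have hba : |b - a| = b - a := abs_of_nonneg (sub_nonneg.2 hab)
  have hdev : |∫ x in a..b, (f x - f a)| ≤ ε * (b - a) := by
    rw [← hba]
    exact intervalIntegral.norm_integral_le_of_norm_le_const (f := fun x => f x - f a)
      (uIoc_of_le hab ▸ h)
  have hsplit : (b - a) * f a = (∫ x in a..b, f x) - ∫ x in a..b, (f x - f a) := by
    simp [integral_sub hf intervalIntegrable_const]
  calc (b - a) * (|f a| - ε) = |(b - a) * f a| - ε * (b - a) := by
        rw [abs_mul, hba]; ring
    _ ≤ |∫ x in a..b, f x| := by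
        rw [hsplit]; linarith [abs_sub (∫ x in a..b, f x) (∫ x in a..b, (f x - f a))]

theorem exists_le_abs_integral_of_le_integral_sq {ι : Type*} {F : ι → ℝ → ℝ}
    (hF : UniformEquicontinuous F) {T₀ γ Δ : ℝ} (hγ : 0 < γ) (hΔ : 0 < Δ)
    (hPE2 : ∀ t, T₀ ≤ t → ∀ i, γ ≤ ∫ τ in t..t + Δ, F i τ ^ 2) :
    ∃ γ' δ : ℝ, 0 < γ' ∧ 0 < δ ∧ ∀ t, T₀ ≤ t → ∀ i, ∃ s ∈ Icc t (t + Δ),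
      γ' ≤ |∫ τ in s..s + δ, F i τ| := by
  set c := √(γ / Δ)
  have hc_pos : 0 < c := by positivity
  obtain ⟨η, hη, hmod⟩ := Metric.uniformEquicontinuous_iff.1 hF (c / 2) (by positivity)
  refine ⟨η / 2 * (c / 2), η / 2, by positivity, by positivity, fun t ht i => ?_⟩
  have hcont : Continuous (F i) := (hF.uniformContinuous i).continuous
  obtain ⟨s, hs, hpeak⟩ :=
    exists_mem_Icc_integral_le_sub_mul (f := fun τ => F i τ ^ 2) (a := t) (b := t + Δ)
      (by linarith) (hcont.pow 2).continuousOn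
  have hlarge : c ≤ |F i s| := by
    rw [← Real.sqrt_sq_eq_abs]
    refine Real.sqrt_le_sqrt ((div_le_iff₀ hΔ).2 ?_)
    linarith [hPE2 t ht i, show t + Δ - t = Δ by ring]
  have hclose : ∀ τ ∈ Ioc s (s + η / 2), |F i τ - F i s| ≤ c / 2 := fun τ hτ =>
    (hmod τ s (by rw [Real.dist_eq, abs_lt]; constructor <;> linarith [hτ.1, hτ.2]) i).le
  refine ⟨s, hs, ?_⟩
  have hint := sub_mul_le_abs_integral_of_abs_sub_le (by linarith)
    (hcont.intervalIntegrable s (s + η / 2)) hclose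
  calc η / 2 * (c / 2) ≤ (s + η / 2 - s) * (|F i s| - c / 2) := by
        rw [add_sub_cancel_left]; gcongr; linarith
    _ ≤ _ := hint

theorem pe2_implies_pe1_finite_general {H : Type*} [NormedAddCommGroup H] [InnerProductSpace ℝ H]
    [CompleteSpace H] {d : ℕ} (k : EuclideanSpace ℝ (Fin d) → H)
    {N : ℕ} (y : Fin N → EuclideanSpace ℝ (Fin d))
    (hspan : Submodule.span ℝ (Set.range fun i => k (y i)) = ⊤)
    (x : ℝ → EuclideanSpace ℝ (Fin d))
    (hequi : ∀ ε : ℝ, 0 < ε → ∃ η : ℝ, 0 < η ∧ ∀ g : H, ‖g‖ = 1 →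
      ∀ s t : ℝ, |s - t| < η → |⟪k (x s), g⟫ - ⟪k (x t), g⟫| < ε)
    (hPE2 : ∃ T₀ γ Δ : ℝ, 0 < T₀ ∧ 0 < γ ∧ 0 < Δ ∧
      ∀ t, T₀ ≤ t → ∀ g : H,
        γ * ‖closedSpanProj k (Set.range y) g‖ ^ 2 ≤
          ∫ τ in t..(t + Δ), (⟪k (x τ), g⟫) ^ 2) :
    ∃ T₀ γ δ Δ : ℝ, 0 < T₀ ∧ 0 < γ ∧ 0 < δ ∧ 0 < Δ ∧
      ∀ t, T₀ ≤ t → ∀ g : H, ∃ s ∈ Set.Icc t (t + Δ),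
        γ * ‖closedSpanProj k (Set.range y) g‖ ≤
          |(∫ τ in s..(s + δ), ⟪k (x τ), g⟫)| := by
  obtain ⟨T₀, γ, Δ, hT₀, hγ, hΔ, hPE2⟩ := hPE2
  have hP : ∀ g, closedSpanProj k (Set.range y) g = g :=
    closedSpanProj_eq_self k (by rwa [← Set.range_comp])
  let F : Metric.sphere (0 : H) 1 → ℝ → ℝ := fun u τ => ⟪k (x τ), u⟫
  have hF : UniformEquicontinuous F := Metric.uniformEquicontinuous_iff.2 fun ε hε => by
    obtain ⟨η, hη, hmod⟩ := hequi ε hε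
    exact ⟨η, hη, fun s t hst u => hmod u (by simp) s t hst⟩
  obtain ⟨γ', δ, hγ', hδ, hPE1⟩ := exists_le_abs_integral_of_le_integral_sq hF hγ hΔ
    fun t ht u => by simpa [hP, F] using hPE2 t ht u
  refine ⟨T₀, γ', δ, Δ, hT₀, hγ', hδ, hΔ, fun t ht g => ?_⟩
  rw [hP]
  rcases eq_or_ne g 0 with rfl | hg
  · exact ⟨t, left_mem_Icc.2 (by linarith), by simp⟩
  let u : Metric.sphere (0 : H) 1 := ⟨‖g‖⁻¹ • g, by simp [norm_smul, hg]⟩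
  obtain ⟨s, hs, hpeak⟩ := hPE1 t ht u
  have hscale : ∫ τ in s..(s + δ), ⟪k (x τ), g⟫ = ‖g‖ * ∫ τ in s..(s + δ), F u τ := by
    rw [← intervalIntegral.integral_const_mul]
    congr 1 with τ
    simp [F, u, real_inner_smul_right, hg]
  refine ⟨s, hs, ?_⟩
  rw [hscale, abs_mul, abs_norm, mul_comm]
  gcongr

/-- For a finite set `Ω = {y 1, …, y N}` with `H = span {k (y i)}`, if the trajectory is
uniformly continuous with relatively compact image and the family
`{t ↦ ⟪k (x t), g⟫ : ‖g‖ = 1}` is uniformly equicontinuous, then PE2 implies PE1. -/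
theorem pe2_implies_pe1_finite {H : Type*} [NormedAddCommGroup H] [InnerProductSpace ℝ H]
    [CompleteSpace H] {d : ℕ} (k : EuclideanSpace ℝ (Fin d) → H) (hk : Continuous k)
    {N : ℕ} (y : Fin N → EuclideanSpace ℝ (Fin d))
    (hspan : Submodule.span ℝ (Set.range fun i => k (y i)) = ⊤)
    (x : ℝ → EuclideanSpace ℝ (Fin d)) (hxu : UniformContinuous x)
    (hcomp : ∃ C : Set (EuclideanSpace ℝ (Fin d)), IsCompact C ∧ ∀ t : ℝ, 0 ≤ t → x t ∈ C)
    (hequi : ∀ ε : ℝ, 0 < ε → ∃ η : ℝ, 0 < η ∧ ∀ g : H, ‖g‖ = 1 →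
      ∀ s t : ℝ, |s - t| < η → |⟪k (x s), g⟫ - ⟪k (x t), g⟫| < ε)
    (hPE2 : ∃ T₀ γ Δ : ℝ, 0 < T₀ ∧ 0 < γ ∧ 0 < Δ ∧
      ∀ t, T₀ ≤ t → ∀ g : H,
        γ * ‖closedSpanProj k (Set.range y) g‖ ^ 2 ≤
          ∫ τ in t..(t + Δ), (⟪k (x τ), g⟫) ^ 2) :
    ∃ T₀ γ δ Δ : ℝ, 0 < T₀ ∧ 0 < γ ∧ 0 < δ ∧ 0 < Δ ∧
      ∀ t, T₀ ≤ t → ∀ g : H, ∃ s ∈ Set.Icc t (t + Δ),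
        γ * ‖closedSpanProj k (Set.range y) g‖ ≤
          |(∫ τ in s..(s + δ), ⟪k (x τ), g⟫)| :=
  pe2_implies_pe1_finite_general k y hspan x hequi hPE2
end

section
/- Let x : [0,∞) → ℝ^d be a continuous trajectory whose image is contained in a compact set, and let ω⁺ := ⋂_{T ≥ 0} closure{x(t) : t ≥ T} denote its positive limit set. Suppose the RKHS separates closed sets: for every closed set A ⊆ ℝ^d and every b ∉ A there exists g ∈ H with ⟪k(a), g⟫_H = 0 for all a ∈ A and ⟪k(b), g⟫_H ≠ 0. If the trajectory x persistently excites a set Ω ⊆ ℝ^d in the sense PE2, then Ω ⊆ ω⁺. -/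
/-!
If `y ∈ Ω` were not a limit point of `x`, separation of the closed set `closure (x '' [T, ∞))`
from `y` would give `g` with `⟪k (x τ), g⟫ = 0` for all `τ ≥ T` but `⟪k y, g⟫ ≠ 0`. The
excitation integrals of `g` then vanish on late windows, so PE2 forces `P_Ω g = 0`; but `k y`
lies in `H_Ω`, hence `⟪k y, g⟫ = ⟪k y, P_Ω g⟫ = 0`.
-/

open scoped RealInnerProductSpace
open Filter MeasureTheory

section

variable {H : Type*} [NormedAddCommGroup H] [InnerProductSpace ℝ H] [CompleteSpace H] {d : ℕ}

def PersistentlyExcites (k : EuclideanSpace ℝ (Fin d) → H) (x : ℝ → EuclideanSpace ℝ (Fin d))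
    (Ω : Set (EuclideanSpace ℝ (Fin d))) : Prop :=
  ∃ T₀ γ Δ : ℝ, 0 < T₀ ∧ 0 < γ ∧ 0 < Δ ∧
    ∀ t, T₀ ≤ t → ∀ g : H,
      γ * ‖closedSpanProj k Ω g‖ ^ 2 ≤ ∫ τ in t..(t + Δ), (⟪k (x τ), g⟫) ^ 2

theorem inner_closedSpanProj_of_mem {k : EuclideanSpace ℝ (Fin d) → H}
    {Ω : Set (EuclideanSpace ℝ (Fin d))} {y : EuclideanSpace ℝ (Fin d)} (hy : y ∈ Ω) (g : H) :
    ⟪k y, closedSpanProj k Ω g⟫ = ⟪k y, g⟫ := by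
  have : CompleteSpace ((Submodule.span ℝ (k '' Ω)).topologicalClosure) :=
    (Submodule.isClosed_topologicalClosure _).completeSpace_coe
  have hky : k y ∈ (Submodule.span ℝ (k '' Ω)).topologicalClosure :=
    Submodule.le_topologicalClosure _ (Submodule.subset_span ⟨y, hy, rfl⟩)
  exact Submodule.inner_orthogonalProjectionOnto_eq_of_mem_left ⟨k y, hky⟩ g

theorem PersistentlyExcites.closedSpanProj_eq_zero {k : EuclideanSpace ℝ (Fin d) → H}
    {x : ℝ → EuclideanSpace ℝ (Fin d)} {Ω : Set (EuclideanSpace ℝ (Fin d))}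
    (hPE : PersistentlyExcites k x Ω) {g : H} {T : ℝ} (hg : ∀ τ, T ≤ τ → ⟪k (x τ), g⟫ = 0) :
    closedSpanProj k Ω g = 0 := by
  obtain ⟨T₀, γ, Δ, -, hγ, hΔ, hPE⟩ := hPE
  set t := max T₀ T
  have hvanish : Set.EqOn (fun τ => ⟪k (x τ), g⟫ ^ 2) 0 (Set.uIcc t (t + Δ)) := by
    intro τ hτ
    rw [Set.uIcc_of_le (by linarith)] at hτ
    simp [hg τ ((le_max_right _ _).trans hτ.1)]
  have hle : γ * ‖closedSpanProj k Ω g‖ ^ 2 ≤ 0 := by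
    simpa [intervalIntegral.integral_congr hvanish] using hPE t (le_max_left _ _) g
  have hsq : ‖closedSpanProj k Ω g‖ ^ 2 = 0 :=
    le_antisymm (nonpos_of_mul_nonpos_right hle hγ) (sq_nonneg _)
  simpa using hsq

end

theorem pe_set_subset_positive_limit_set_general {H : Type*} [NormedAddCommGroup H]
    [InnerProductSpace ℝ H] [CompleteSpace H] {d : ℕ}
    (k : EuclideanSpace ℝ (Fin d) → H)
    (x : ℝ → EuclideanSpace ℝ (Fin d))
    (hsep : ∀ A : Set (EuclideanSpace ℝ (Fin d)), IsClosed A →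
      ∀ b ∉ A, ∃ g : H, (∀ a ∈ A, ⟪k a, g⟫ = 0) ∧ ⟪k b, g⟫ ≠ 0)
    (Ω : Set (EuclideanSpace ℝ (Fin d)))
    (hPE2 : ∃ T₀ γ Δ : ℝ, 0 < T₀ ∧ 0 < γ ∧ 0 < Δ ∧
      ∀ t, T₀ ≤ t → ∀ g : H,
        γ * ‖closedSpanProj k Ω g‖ ^ 2 ≤ ∫ τ in t..(t + Δ), (⟪k (x τ), g⟫) ^ 2) :
    Ω ⊆ ⋂ T ∈ Set.Ici (0 : ℝ), closure (x '' Set.Ici T) := by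
  intro y hy
  simp only [Set.mem_iInter, Set.mem_Ici]
  intro T _
  by_contra hyT
  obtain ⟨g, hg, hgy⟩ := hsep _ isClosed_closure y hyT
  have hproj : closedSpanProj k Ω g = 0 :=
    PersistentlyExcites.closedSpanProj_eq_zero hPE2 fun τ hτ =>
      hg _ (subset_closure ⟨τ, hτ, rfl⟩)
  exact hgy (by rw [← inner_closedSpanProj_of_mem hy, hproj, inner_zero_right])

/-- If the RKHS separates closed sets and the trajectory `x` (continuous, with relatively
compact forward image) persistently excites `Ω` in the sense PE2, then `Ω` is contained in
the positive limit set `ω⁺ = ⋂_{T ≥ 0} closure {x t : t ≥ T}`. -/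
theorem pe_set_subset_positive_limit_set {H : Type*} [NormedAddCommGroup H]
    [InnerProductSpace ℝ H] [CompleteSpace H] {d : ℕ}
    (k : EuclideanSpace ℝ (Fin d) → H) (hk : Continuous k)
    (x : ℝ → EuclideanSpace ℝ (Fin d)) (hx : Continuous x)
    (hcomp : ∃ C : Set (EuclideanSpace ℝ (Fin d)), IsCompact C ∧ ∀ t : ℝ, 0 ≤ t → x t ∈ C)
    (hsep : ∀ A : Set (EuclideanSpace ℝ (Fin d)), IsClosed A →
      ∀ b ∉ A, ∃ g : H, (∀ a ∈ A, ⟪k a, g⟫ = 0) ∧ ⟪k b, g⟫ ≠ 0)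
    (Ω : Set (EuclideanSpace ℝ (Fin d)))
    (hPE2 : ∃ T₀ γ Δ : ℝ, 0 < T₀ ∧ 0 < γ ∧ 0 < Δ ∧
      ∀ t, T₀ ≤ t → ∀ g : H,
        γ * ‖closedSpanProj k Ω g‖ ^ 2 ≤ ∫ τ in t..(t + Δ), (⟪k (x τ), g⟫) ^ 2) :
    Ω ⊆ ⋂ T ∈ Set.Ici (0 : ℝ), closure (x '' Set.Ici T) :=
  pe_set_subset_positive_limit_set_general k x hsep Ω hPE2
end

section
/- Fix T > 0, a continuous trajectory x : [0,T] → ℝ^d, A ∈ ℝ^{d×d}, B ∈ ℝ^d, Γ > 0, and a symmetric positive-definite P ∈ ℝ^{d×d}. Let (P_n)_{n∈ℕ} be orthogonal projections of H onto closed subspaces H_n ⊆ H such that P_n g → g in H for every g ∈ H. Suppose the embedding into continuous functions on Ω ⊆ ℝ^d is uniform: there is C > 0 with sup_{y ∈ Ω} |⟪k(y), g⟫_H| ≤ C ‖g‖_H for all g ∈ H. Let (x̂, f̂) be differentiable curves in ℝ^d and H satisfying x̂'(t) = A x̂(t) + ⟪k(x(t)), f̂(t)⟫_H B and f̂'(t)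 = Γ⁻¹ (Bᵀ P (x(t) − x̂(t))) k(x(t)) on [0,T], and for each n let (x̂_n, f̂_n) with f̂_n(t) ∈ H_n satisfy x̂_n'(t) = A x̂_n(t) + ⟪k(x(t)), f̂_n(t)⟫_H B and f̂_n'(t) = Γ⁻¹ (Bᵀ P (x(t) − x̂_n(t))) P_n k(x(t)) on [0,T], with x̂_n(0) = x̂(0) and f̂_n(0) = P_n f̂(0). Then sup_{t ∈ [0,T]} ‖x̂(t) − x̂_n(t)‖_{ℝ^d} → 0 and sup_{t ∈ [0,T]} sup_{y ∈ Ω} |⟪k(y), f̂(t) − f̂_n(t)⟫_H| → 0 as n → ∞. -/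
/-!
The error `(x̂ - x̂ₙ, f̂ - f̂ₙ)` satisfies `‖e'‖ ≤ L ‖e‖ + |c(t)| ‖k(x t) - Pₙ k(x t)‖`, where
`c(t) = Γ⁻¹ ⟪B, P (x t - x̂ t)⟫` is the gain of the exact learning law and `L` only involves `A`,
`B`, `Γ`, `P` and a bound for `k` along the compact trajectory (the `Pₙ` are contractions).
Being `1`-Lipschitz and pointwise convergent, the `Pₙ` converge to the identity uniformly on the
compact set `k (x [0, T])`, so Grönwall's inequality makes the error uniformly small on `[0, T]`;
the uniform embedding turns the bound on `‖f̂ - f̂ₙ‖` into one that is uniform on `Ω`.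
-/

open scoped RealInnerProductSpace Matrix
open Filter MeasureTheory

noncomputable def subProj {H : Type*} [NormedAddCommGroup H] [InnerProductSpace ℝ H]
    [CompleteSpace H] (K : Submodule ℝ H) (hK : IsClosed (K : Set H)) (g : H) : H :=
  haveI : CompleteSpace K := hK.completeSpace_coe
  (K.orthogonalProjectionOnto g : H)

open Set Topology

section Projection

variable {H : Type*} [NormedAddCommGroup H] [InnerProductSpace ℝ H] [CompleteSpace H]

theorem norm_subProj_le (K : Submodule ℝ H) (hK : IsClosed (K : Set H)) (g : H) :
    ‖subProj K hK g‖ ≤ ‖g‖ :=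
  haveI : CompleteSpace K := hK.completeSpace_coe
  K.norm_starProjection_apply_le g

theorem lipschitzWith_subProj (K : Submodule ℝ H) (hK : IsClosed (K : Set H)) :
    LipschitzWith 1 (subProj K hK) :=
  haveI : CompleteSpace K := hK.completeSpace_coe
  K.lipschitzWith_starProjection

end Projection

theorem tendstoUniformlyOn_of_lipschitzWith {ι X Y : Type*} [PseudoMetricSpace X]
    [PseudoMetricSpace Y] {p : Filter ι} {F : ι → X → Y} {f : X → Y} {K : NNReal}
    {S : Set X} (hS : IsCompact S) (hF : ∀ i, LipschitzWith K (F i))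
    (hlim : ∀ x ∈ S, Tendsto (F · x) p (𝓝 (f x))) : TendstoUniformlyOn F f p S := by
  have hcont := (LipschitzWith.uniformEquicontinuous F K hF).equicontinuous
  have := (EquicontinuousOn.tendsto_uniformOnFun_iff_pi' (𝔖 := {S}) (by simpa using hS)
    (by simpa using hcont.equicontinuousOn S) p f).2 ?_
  · exact (UniformOnFun.tendsto_iff_tendstoUniformlyOn.1 this) S rfl
  · exact tendsto_pi_nhds.2 fun x => hlim x (by simpa using x.2)

theorem gronwallBound_le_mul_exp {δ K ε : ℝ} (hK : 0 < K) (hε : 0 ≤ ε) (x : ℝ) :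
    gronwallBound δ K ε x ≤ (δ + ε / K) * Real.exp (K * x) := by
  rw [gronwallBound_of_K_ne_0 hK.ne']
  linarith [div_nonneg hε hK.le]

theorem tendstoUniformlyOn_zero_of_norm_deriv_le {ι E : Type*} [NormedAddCommGroup E]
    [NormedSpace ℝ E] {p : Filter ι} {u u' : ι → ℝ → E} {a b L : ℝ}
    (hu : ∀ i, ContinuousOn (u i) (Icc a b))
    (hu' : ∀ i, ∀ t ∈ Ico a b, HasDerivWithinAt (u i) (u' i t) (Ici t) t)
    (hbound : ∀ η > 0, ∀ᶠ i in p, ∀ t ∈ Ico a b, ‖u' i t‖ ≤ L * ‖u i t‖ + η)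
    (h0 : Tendsto (fun i => u i a) p (𝓝 0)) :
    TendstoUniformlyOn u 0 p (Icc a b) := by
  -- Enlarging `L` to a positive `K` makes `gronwallBound_le_mul_exp` available.
  set K := max L 1
  have hK : 0 < K := lt_max_of_lt_right one_pos
  set c := (1 + K⁻¹) * Real.exp (K * (b - a))
  have hc : 0 < c := by positivity
  rw [Metric.tendstoUniformlyOn_iff]
  intro ε hε
  set η := ε / (2 * c)
  have hη : 0 < η := by positivity
  filter_upwards [hbound η hη, (Metric.tendsto_nhds.1 h0) η hη] with i hi hi0 t ht
  have hiK : ∀ s ∈ Ico a b, ‖u' i s‖ ≤ K * ‖u i s‖ + η := fun s hs =>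
    (hi s hs).trans (by gcongr; exact le_max_left _ _)
  have hgr := norm_le_gronwallBound_of_norm_deriv_right_le (hu i) (hu' i)
    (by simpa using hi0.le) hiK t ht
  rw [Pi.zero_apply, dist_zero_left]
  calc ‖u i t‖ ≤ (η + η / K) * Real.exp (K * (t - a)) :=
        hgr.trans (gronwallBound_le_mul_exp hK hη.le _)
    _ ≤ η * c := by
        rw [div_eq_mul_inv, ← mul_one_add, mul_assoc]
        simp only [c]
        gcongr
        exact ht.2
    _ < ε := by
        rw [show η * c = ε / 2 by simp only [η]; field_simp]
        linarith

theorem norm_smul_sub_smul_le {𝕜 F : Type*} [NormedField 𝕜] [SeminormedAddCommGroup F]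
    [NormedSpace 𝕜 F] (a b : 𝕜) (v w : F) :
    ‖a • v - b • w‖ ≤ ‖a‖ * ‖v - w‖ + ‖a - b‖ * ‖w‖ := by
  rw [show a • v - b • w = a • (v - w) + (a - b) • w by rw [smul_sub, sub_smul]; abel,
    ← norm_smul, ← norm_smul]
  exact norm_add_le _ _

section Estimator

variable {E H : Type*} [NormedAddCommGroup E] [InnerProductSpace ℝ E]
  [NormedAddCommGroup H] [InnerProductSpace ℝ H]

/-- The observer uses the feature vector `κ`, the learning law uses `κ'`: `κ` itself for the
exact estimator, its projection for the approximate one. -/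
def estimatorField (A P : E →L[ℝ] E) (B : E) (γ : ℝ) (ξ : E) (κ κ' : H) (z : E × H) :
    E × H :=
  (A z.1 + ⟪κ, z.2⟫ • B, (γ * ⟪B, P (ξ - z.1)⟫) • κ')

variable (A P : E →L[ℝ] E) (B : E) (γ : ℝ)

theorem norm_fst_estimatorField_sub_le (ξ : E) {κ : H} (κ' κ'' : H) {K : ℝ} (hκ : ‖κ‖ ≤ K)
    (z z' : E × H) :
    ‖(estimatorField A P B γ ξ κ κ' z - estimatorField A P B γ ξ κ κ'' z').1‖ ≤
      (‖A‖ + K * ‖B‖) * ‖z - z'‖ :=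
  calc _ = ‖A (z - z').1 + ⟪κ, (z - z').2⟫ • B‖ := by
        simp only [estimatorField, Prod.fst_sub, Prod.snd_sub, map_sub, inner_sub_right,
          sub_smul]
        abel_nf
    _ ≤ ‖A‖ * ‖(z - z').1‖ + ‖κ‖ * ‖B‖ * ‖(z - z').2‖ := by
        refine (norm_add_le _ _).trans (add_le_add (A.le_opNorm _) ?_)
        rw [norm_smul, Real.norm_eq_abs, mul_right_comm]
        gcongr
        exact abs_real_inner_le_norm _ _
    _ ≤ (‖A‖ + K * ‖B‖) * ‖z - z'‖ := by
        have hK : 0 ≤ K := (norm_nonneg κ).trans hκ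
        rw [add_mul]
        gcongr
        exacts [norm_fst_le _, norm_snd_le _]

theorem norm_snd_estimatorField_sub_le (ξ : E) (κ : H) {κ' : H} {K : ℝ} (hκ' : ‖κ'‖ ≤ K)
    (z z' : E × H) :
    ‖(estimatorField A P B γ ξ κ κ z - estimatorField A P B γ ξ κ κ' z').2‖ ≤
      |γ| * ‖B‖ * ‖P‖ * K * ‖z - z'‖ + |γ * ⟪B, P (ξ - z.1)⟫| * ‖κ - κ'‖ := by
  have hcoef : |γ * ⟪B, P (ξ - z.1)⟫ - γ * ⟪B, P (ξ - z'.1)⟫| ≤ |γ| * ‖B‖ * ‖P‖ * ‖z - z'‖ :=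
    calc _ = |γ| * |⟪B, P (z' - z).1⟫| := by
          rw [← mul_sub, ← inner_sub_right, ← map_sub, sub_sub_sub_cancel_left, abs_mul,
            Prod.fst_sub]
      _ ≤ |γ| * ‖B‖ * ‖P‖ * ‖(z' - z).1‖ := by
          rw [mul_assoc, mul_assoc]
          gcongr
          exact (abs_real_inner_le_norm _ _).trans (by gcongr; exact P.le_opNorm _)
      _ ≤ |γ| * ‖B‖ * ‖P‖ * ‖z - z'‖ := by
          rw [norm_sub_rev z]
          gcongr
          exact norm_fst_le _
  have hlearn := norm_smul_sub_smul_le (γ * ⟪B, P (ξ - z.1)⟫) (γ * ⟪B, P (ξ - z'.1)⟫) κ κ'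
  rw [Real.norm_eq_abs, Real.norm_eq_abs] at hlearn
  refine hlearn.trans ?_
  rw [add_comm, mul_right_comm _ K]
  gcongr

theorem norm_estimatorField_sub_le (ξ : E) {κ κ' : H} {K : ℝ} (hκ : ‖κ‖ ≤ K) (hκ' : ‖κ'‖ ≤ K)
    (z z' : E × H) :
    ‖estimatorField A P B γ ξ κ κ z - estimatorField A P B γ ξ κ κ' z'‖ ≤
      (‖A‖ + K * ‖B‖ * (1 + |γ| * ‖P‖)) * ‖z - z'‖ + |γ * ⟪B, P (ξ - z.1)⟫| * ‖κ - κ'‖ := by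
  have hfst := norm_fst_estimatorField_sub_le A P B γ ξ κ κ' hκ z z'
  have hsnd := norm_snd_estimatorField_sub_le A P B γ ξ κ hκ' z z'
  have hK : 0 ≤ K := (norm_nonneg κ).trans hκ
  have : 0 ≤ K * ‖B‖ * (|γ| * ‖P‖) * ‖z - z'‖ + |γ * ⟪B, P (ξ - z.1)⟫| * ‖κ - κ'‖ := by
    positivity
  have : 0 ≤ (‖A‖ + K * ‖B‖) * ‖z - z'‖ := by positivity
  rw [Prod.norm_def]
  exact max_le (by linarith) (by linarith)

theorem tendstoUniformlyOn_of_hasDerivAt_estimatorField {ι : Type*} {p : Filter ι} {a b : ℝ}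
    {ξ : ℝ → E} {κ : ℝ → H} (hξ : ContinuousOn ξ (Icc a b)) (hκ : ContinuousOn κ (Icc a b))
    {Q : ι → H → H} (hQ : ∀ i g, ‖Q i g‖ ≤ ‖g‖)
    (hQκ : TendstoUniformlyOn (fun i t => Q i (κ t)) κ p (Icc a b))
    {z : ℝ → E × H} {zn : ι → ℝ → E × H}
    (hz : ∀ t ∈ Icc a b, HasDerivAt z (estimatorField A P B γ (ξ t) (κ t) (κ t) (z t)) t)
    (hzn : ∀ i, ∀ t ∈ Icc a b,
      HasDerivAt (zn i) (estimatorField A P B γ (ξ t) (κ t) (Q i (κ t)) (zn i t)) t)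
    (h0 : Tendsto (fun i => zn i a) p (𝓝 (z a))) :
    TendstoUniformlyOn zn z p (Icc a b) := by
  have hzc : ContinuousOn z (Icc a b) := fun t ht => (hz t ht).continuousAt.continuousWithinAt
  obtain ⟨K, hK⟩ := isCompact_Icc.exists_bound_of_continuousOn hκ
  have hc : ContinuousOn (fun t => γ * ⟪B, P (ξ t - (z t).1)⟫) (Icc a b) := by
    fun_prop
  obtain ⟨M, hM⟩ := isCompact_Icc.exists_bound_of_continuousOn hc
  suffices TendstoUniformlyOn (fun i t => z t - zn i t) 0 p (Icc a b) by
    rw [Metric.tendstoUniformlyOn_iff] at this ⊢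
    simpa only [Pi.zero_apply, dist_zero_left, dist_eq_norm, zero_sub, norm_neg] using this
  refine tendstoUniformlyOn_zero_of_norm_deriv_le (L := ‖A‖ + K * ‖B‖ * (1 + |γ| * ‖P‖))
    (fun i => hzc.sub fun t ht => (hzn i t ht).continuousAt.continuousWithinAt)
    (fun i t ht => ((hz t (Ico_subset_Icc_self ht)).sub
      (hzn i t (Ico_subset_Icc_self ht))).hasDerivWithinAt) ?_ ?_
  · intro η hη
    filter_upwards [Metric.tendstoUniformlyOn_iff.1 hQκ (η / (|M| + 1)) (by positivity)]
      with i hi t ht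
    replace ht := Ico_subset_Icc_self ht
    have hcQ : |γ * ⟪B, P (ξ t - (z t).1)⟫| * ‖κ t - Q i (κ t)‖ ≤ η :=
      calc _ ≤ (|M| + 1) * (η / (|M| + 1)) := by
            rw [← dist_eq_norm]
            gcongr
            · exact (hM t ht).trans ((le_abs_self M).trans (lt_add_one _).le)
            · exact (hi t ht).le
        _ = η := by field_simp
    calc _ ≤ _ := norm_estimatorField_sub_le A P B γ (ξ t) (hK t ht)
          ((hQ i _).trans (hK t ht)) _ _
      _ ≤ _ := by gcongr
  · simpa using (tendsto_const_nhds (x := z a)).sub h0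

end Estimator

theorem estimator_approximation_convergence_general {H : Type*} [NormedAddCommGroup H]
    [InnerProductSpace ℝ H] [CompleteSpace H] {d : ℕ}
    (k : EuclideanSpace ℝ (Fin d) → H) (hk : Continuous k)
    (T : ℝ)
    (x : ℝ → EuclideanSpace ℝ (Fin d)) (hx : Continuous x)
    (A : Matrix (Fin d) (Fin d) ℝ) (B : EuclideanSpace ℝ (Fin d))
    (Γ : ℝ)
    (P : Matrix (Fin d) (Fin d) ℝ)
    (Hn : ℕ → Submodule ℝ H) (hHn : ∀ n, IsClosed ((Hn n : Submodule ℝ H) : Set H))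
    (hproj : ∀ g : H, Tendsto (fun n => subProj (Hn n) (hHn n) g) atTop (nhds g))
    (Ω : Set (EuclideanSpace ℝ (Fin d)))
    (C : ℝ) (hC : 0 < C)
    (hembed : ∀ g : H, ∀ y ∈ Ω, |⟪k y, g⟫| ≤ C * ‖g‖)
    (xhat : ℝ → EuclideanSpace ℝ (Fin d)) (fhat : ℝ → H)
    (hxhat : ∀ t ∈ Set.Icc (0 : ℝ) T,
      HasDerivAt xhat (Matrix.toEuclideanLin A (xhat t) + ⟪k (x t), fhat t⟫ • B) t)
    (hfhat : ∀ t ∈ Set.Icc (0 : ℝ) T,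
      HasDerivAt fhat ((Γ⁻¹ * ⟪B, Matrix.toEuclideanLin P (x t - xhat t)⟫) • k (x t)) t)
    (xhatn : ℕ → ℝ → EuclideanSpace ℝ (Fin d)) (fhatn : ℕ → ℝ → H)
    (hxhatn : ∀ n, ∀ t ∈ Set.Icc (0 : ℝ) T,
      HasDerivAt (xhatn n)
        (Matrix.toEuclideanLin A (xhatn n t) + ⟪k (x t), fhatn n t⟫ • B) t)
    (hfhatn : ∀ n, ∀ t ∈ Set.Icc (0 : ℝ) T,
      HasDerivAt (fhatn n)
        ((Γ⁻¹ * ⟪B, Matrix.toEuclideanLin P (x t - xhatn n t)⟫) •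
          subProj (Hn n) (hHn n) (k (x t))) t)
    (hx0 : ∀ n, xhatn n 0 = xhat 0)
    (hf0 : ∀ n, fhatn n 0 = subProj (Hn n) (hHn n) (fhat 0)) :
    (∀ ε : ℝ, 0 < ε → ∃ N : ℕ, ∀ n ≥ N, ∀ t ∈ Set.Icc (0 : ℝ) T,
      ‖xhat t - xhatn n t‖ < ε) ∧
    (∀ ε : ℝ, 0 < ε → ∃ N : ℕ, ∀ n ≥ N, ∀ t ∈ Set.Icc (0 : ℝ) T, ∀ y ∈ Ω,
      |⟪k y, fhat t - fhatn n t⟫| < ε) := by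
  have hκ : Continuous fun t => k (x t) := hk.comp hx
  have hQκ : TendstoUniformlyOn (fun n t => subProj (Hn n) (hHn n) (k (x t)))
      (fun t => k (x t)) atTop (Icc 0 T) :=
    ((tendstoUniformlyOn_of_lipschitzWith (isCompact_Icc.image hκ)
      (fun n => lipschitzWith_subProj _ _) fun g _ => hproj g).comp _).mono
      fun t ht => mem_image_of_mem _ ht
  have h0 : Tendsto (fun n => (xhatn n 0, fhatn n 0)) atTop (𝓝 (xhat 0, fhat 0)) := by
    simpa only [hx0, hf0] using tendsto_const_nhds.prodMk_nhds (hproj (fhat 0))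
  have hconv := tendstoUniformlyOn_of_hasDerivAt_estimatorField
    (Matrix.toEuclideanCLM (𝕜 := ℝ) A) (Matrix.toEuclideanCLM (𝕜 := ℝ) P) B Γ⁻¹
    hx.continuousOn hκ.continuousOn (fun n => norm_subProj_le _ _) hQκ
    (fun t ht => (hxhat t ht).prodMk (hfhat t ht))
    (fun n t ht => (hxhatn n t ht).prodMk (hfhatn n t ht)) h0
  have herr : ∀ ε > 0, ∃ N, ∀ n ≥ N, ∀ t ∈ Icc (0 : ℝ) T,
      ‖xhat t - xhatn n t‖ < ε ∧ ‖fhat t - fhatn n t‖ < ε := fun ε hε =>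
    (eventually_atTop.1 (Metric.tendstoUniformlyOn_iff.1 hconv ε hε)).imp fun N hN n hn t ht => by
      simpa only [dist_eq_norm, Prod.norm_def, Prod.fst_sub, Prod.snd_sub, max_lt_iff] using
        hN n hn t ht
  refine ⟨fun ε hε => (herr ε hε).imp fun N hN n hn t ht => (hN n hn t ht).1, fun ε hε => ?_⟩
  refine (herr (ε / C) (div_pos hε hC)).imp fun N hN n hn t ht y hy => ?_
  calc |⟪k y, fhat t - fhatn n t⟫| ≤ C * ‖fhat t - fhatn n t‖ := hembed _ y hy
    _ < C * (ε / C) := mul_lt_mul_of_pos_left (hN n hn t ht).2 hC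
    _ = ε := mul_div_cancel₀ ε hC.ne'

/-- Convergence of the finite-dimensional approximations of the adaptive estimator:
if `P_n g → g` for all `g` and the embedding into `C(Ω)` is uniform, then on any finite
horizon `[0, T]` the approximate state estimates converge uniformly to the
infinite-dimensional state estimate, and the approximate function estimates converge to
the infinite-dimensional function estimate uniformly on `Ω` and in time. -/
theorem estimator_approximation_convergence {H : Type*} [NormedAddCommGroup H]
    [InnerProductSpace ℝ H] [CompleteSpace H] {d : ℕ}
    (k : EuclideanSpace ℝ (Fin d) → H) (hk : Continuous k)
    (T : ℝ) (hT : 0 < T)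
    (x : ℝ → EuclideanSpace ℝ (Fin d)) (hx : Continuous x)
    (A : Matrix (Fin d) (Fin d) ℝ) (B : EuclideanSpace ℝ (Fin d))
    (Γ : ℝ) (hΓ : 0 < Γ)
    (P : Matrix (Fin d) (Fin d) ℝ) (hP : P.PosDef)
    (Hn : ℕ → Submodule ℝ H) (hHn : ∀ n, IsClosed ((Hn n : Submodule ℝ H) : Set H))
    (hproj : ∀ g : H, Tendsto (fun n => subProj (Hn n) (hHn n) g) atTop (nhds g))
    (Ω : Set (EuclideanSpace ℝ (Fin d)))
    (C : ℝ) (hC : 0 < C)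
    (hembed : ∀ g : H, ∀ y ∈ Ω, |⟪k y, g⟫| ≤ C * ‖g‖)
    (xhat : ℝ → EuclideanSpace ℝ (Fin d)) (fhat : ℝ → H)
    (hxhat : ∀ t ∈ Set.Icc (0 : ℝ) T,
      HasDerivAt xhat (Matrix.toEuclideanLin A (xhat t) + ⟪k (x t), fhat t⟫ • B) t)
    (hfhat : ∀ t ∈ Set.Icc (0 : ℝ) T,
      HasDerivAt fhat ((Γ⁻¹ * ⟪B, Matrix.toEuclideanLin P (x t - xhat t)⟫) • k (x t)) t)
    (xhatn : ℕ → ℝ → EuclideanSpace ℝ (Fin d)) (fhatn : ℕ → ℝ → H)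
    (hmem : ∀ n, ∀ t ∈ Set.Icc (0 : ℝ) T, fhatn n t ∈ Hn n)
    (hxhatn : ∀ n, ∀ t ∈ Set.Icc (0 : ℝ) T,
      HasDerivAt (xhatn n)
        (Matrix.toEuclideanLin A (xhatn n t) + ⟪k (x t), fhatn n t⟫ • B) t)
    (hfhatn : ∀ n, ∀ t ∈ Set.Icc (0 : ℝ) T,
      HasDerivAt (fhatn n)
        ((Γ⁻¹ * ⟪B, Matrix.toEuclideanLin P (x t - xhatn n t)⟫) •
          subProj (Hn n) (hHn n) (k (x t))) t)
    (hx0 : ∀ n, xhatn n 0 = xhat 0)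
    (hf0 : ∀ n, fhatn n 0 = subProj (Hn n) (hHn n) (fhat 0)) :
    (∀ ε : ℝ, 0 < ε → ∃ N : ℕ, ∀ n ≥ N, ∀ t ∈ Set.Icc (0 : ℝ) T,
      ‖xhat t - xhatn n t‖ < ε) ∧
    (∀ ε : ℝ, 0 < ε → ∃ N : ℕ, ∀ n ≥ N, ∀ t ∈ Set.Icc (0 : ℝ) T, ∀ y ∈ Ω,
      |⟪k y, fhat t - fhatn n t⟫| < ε) :=
  estimator_approximation_convergence_general k hk T x hx A B Γ P Hn hHn hproj Ω C hC hembed xhat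
    fhat hxhat hfhat xhatn fhatn hxhatn hfhatn hx0 hf0
end

section
/- Let K(y,z) = φ(‖y − z‖) with φ : [0,∞) → ℝ continuous be a positive-definite radial kernel with feature map k : ℝ^d → H (so ⟪k(y), k(z)⟫_H = φ(‖y − z‖), and the Gram matrix of any finite set of distinct points is positive definite). Let x_1, …, x_n ∈ ℝ^d be distinct kernel centers and x : [0,∞) → ℝ^d a continuous trajectory. Then there exists ε̄ with 0 < ε̄ < (1/2) min_{i≠j} ‖x_i − x_j‖ such that the following holds: if for some ε ∈ (0, ε̄] there exist δ > 0 and c > 0 such that for every t₀ ≥ 0 and every i ∈ {1,…,n} the Lebesgue measure of I_i := {t ∈ [t₀, t₀+δ] : ‖x(t) − x_i‖ ≤ ε} is at least c, then the finite-dimensional space H_n := span{k(x_1), …, k(x_n)} is persistently excited in the sense PE2: there exist γ > 0 and Δ > 0 such that ∫_t^{t+Δ} ⟪k(x(τ)), g⟫_H² dτ ≥ γ ‖g‖_H² for all t ≥ 0 and all g ∈ H_n. -/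
/-!
Evaluation at the centres, `g ↦ (⟪k (x_i), g⟫)_i`, is injective on the finite-dimensional span
`H_n`, hence bounded below: every nonzero `g ∈ H_n` has a centre `x_i` with
`|⟪k (x_i), g⟫| ≥ σ ‖g‖`. Since `‖k y - k z‖² = 2 (φ 0 - φ ‖y - z‖)`, the feature map is uniformly
continuous, so for `ε̄` small enough `|⟪k (x τ), g⟫| ≥ σ ‖g‖ / 2` whenever `x τ` is `ε`-close to
`x_i`. Integrating over the dwell set, of measure at least `c`, gives PE2 with `Δ = δ` and
`γ = c σ² / 4`.
-/

open scoped RealInnerProductSpace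
open Filter MeasureTheory Topology

theorem exists_pos_mul_norm_le_abs_inner_of_mem_span {E ι : Type*} [NormedAddCommGroup E]
    [InnerProductSpace ℝ E] [Fintype ι] (v : ι → E) :
    ∃ σ > 0, ∀ g ∈ Submodule.span ℝ (Set.range v), g ≠ 0 → ∃ i, σ * ‖g‖ ≤ |⟪v i, g⟫| := by
  set V := Submodule.span ℝ (Set.range v)
  have : FiniteDimensional ℝ V := .span_of_finite ℝ (Set.finite_range v)
  let L : V →ₗ[ℝ] ι → ℝ := (LinearMap.pi fun i => innerₛₗ ℝ (v i)).domRestrict V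
  have hL : Function.Injective L := by
    refine (injective_iff_map_eq_zero L).2 fun g hg => Subtype.ext ?_
    have hker : (g : E) ∈ LinearMap.ker (innerₛₗ ℝ (g : E)) := by
      refine Submodule.span_le.2 ?_ g.2
      rintro _ ⟨i, rfl⟩
      simpa [L, real_inner_comm] using congrFun hg i
    simpa using hker
  obtain ⟨K, hK, hKL⟩ := L.injective_iff_antilipschitz.1 hL
  refine ⟨1 / K, by positivity, fun g hg hg0 => ?_⟩
  by_contra! hsmall
  have hgK : ‖g‖ ≤ K * ‖L ⟨g, hg⟩‖ := by simpa using hKL.le_mul_dist ⟨g, hg⟩ 0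
  have hLg : ‖L ⟨g, hg⟩‖ < 1 / K * ‖g‖ := (pi_norm_lt_iff (by positivity)).2 fun i => hsmall i
  rw [one_div_mul_eq_div, lt_div_iff₀ (by positivity)] at hLg
  linarith

theorem abs_inner_sub_norm_mul_le_abs_inner {E : Type*} [NormedAddCommGroup E]
    [InnerProductSpace ℝ E] (u v g : E) : |⟪v, g⟫| - ‖u - v‖ * ‖g‖ ≤ |⟪u, g⟫| := by
  have h := abs_real_inner_le_norm (u - v) g
  rw [inner_sub_left] at h
  linarith [abs_sub_abs_le_abs_sub ⟪v, g⟫ ⟪u, g⟫, abs_sub_comm ⟪u, g⟫ ⟪v, g⟫]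

theorem uniformContinuous_of_inner_eq_radial {E H : Type*} [SeminormedAddCommGroup E]
    [NormedAddCommGroup H] [InnerProductSpace ℝ H] {k : E → H} {φ : ℝ → ℝ}
    (hφ : ContinuousAt φ 0) (hker : ∀ y z, ⟪k y, k z⟫ = φ ‖y - z‖) : UniformContinuous k := by
  have hdist : ∀ y z, ‖k y - k z‖ ^ 2 = 2 * (φ 0 - φ ‖y - z‖) := by
    intro y z
    rw [norm_sub_sq_real, ← real_inner_self_eq_norm_sq, ← real_inner_self_eq_norm_sq, hker,
      hker, hker, sub_self, sub_self, norm_zero]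
    ring
  have hψ : Tendsto (fun r => 2 * (φ 0 - φ r)) (𝓝 0) (𝓝 0) := by
    simpa using (hφ.const_sub (φ 0)).const_mul 2
  rw [Metric.uniformContinuous_iff]
  intro η hη
  obtain ⟨ρ, hρ, hρψ⟩ := Metric.tendsto_nhds_nhds.1 hψ (η ^ 2) (by positivity)
  refine ⟨ρ, hρ, fun y z hyz => ?_⟩
  have hsq : ‖k y - k z‖ ^ 2 < η ^ 2 := by
    rw [hdist]
    refine (abs_lt.1 ?_).2
    simpa using hρψ (x := ‖y - z‖) (by simpa [dist_eq_norm] using hyz)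
  rw [dist_eq_norm]
  simpa using abs_lt_of_sq_lt_sq hsq hη.le

theorem eventually_nhdsGT_lt_half_norm_sub {E ι : Type*} [NormedAddCommGroup E] [Finite ι]
    {f : ι → E} (hf : Function.Injective f) :
    ∀ᶠ r in 𝓝[>] (0 : ℝ), ∀ i j, i ≠ j → r < ‖f i - f j‖ / 2 := by
  refine eventually_all.2 fun i => eventually_all.2 fun j => eventually_imp_distrib_left.2 ?_
  intro hij
  have : 0 < ‖f i - f j‖ / 2 := by
    have := norm_pos_iff.2 (sub_ne_zero.2 (hf.ne hij))
    positivity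
  exact nhdsWithin_le_nhds (eventually_lt_nhds this)

theorem mul_le_intervalIntegral_of_le_on {f : ℝ → ℝ} {a b c m : ℝ} {S : Set ℝ}
    (hf : IntegrableOn f (Set.Icc a b)) (hab : a ≤ b) (hf0 : ∀ τ ∈ Set.Icc a b, 0 ≤ f τ)
    (hS : MeasurableSet S) (hSab : S ⊆ Set.Icc a b) (hSc : ENNReal.ofReal c ≤ volume S)
    (hm : 0 ≤ m) (hmf : ∀ τ ∈ S, m ≤ f τ) : c * m ≤ ∫ τ in a..b, f τ := by
  have hSfin : volume S ≠ ⊤ := ((measure_mono hSab).trans_lt measure_Icc_lt_top).ne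
  calc c * m ≤ volume.real S * m :=
        mul_le_mul_of_nonneg_right ((ENNReal.ofReal_le_iff_le_toReal hSfin).1 hSc) hm
    _ ≤ ∫ τ in S, f τ := by
        simpa [mul_comm] using setIntegral_ge_of_const_le_real hS hSfin hmf (hf.mono_set hSab)
    _ ≤ ∫ τ in Set.Icc a b, f τ :=
        setIntegral_mono_set hf ((ae_restrict_iff' measurableSet_Icc).2 (ae_of_all _ hf0))
          hSab.eventuallyLE
    _ = ∫ τ in a..b, f τ := by
        rw [integral_Icc_eq_integral_Ioc, intervalIntegral.integral_of_le hab]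

theorem sufficient_condition_for_PE_general {H : Type*} [NormedAddCommGroup H]
    [InnerProductSpace ℝ H] {d n : ℕ}
    (k : EuclideanSpace ℝ (Fin d) → H)
    (φ : ℝ → ℝ) (hφ : Continuous φ)
    (hker : ∀ y z : EuclideanSpace ℝ (Fin d), ⟪k y, k z⟫ = φ ‖y - z‖)
    (xc : Fin n → EuclideanSpace ℝ (Fin d)) (hxc : Function.Injective xc)
    (x : ℝ → EuclideanSpace ℝ (Fin d)) (hx : Continuous x) :
    ∃ εbar : ℝ, 0 < εbar ∧ (∀ i j, i ≠ j → εbar < ‖xc i - xc j‖ / 2) ∧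
      ∀ ε : ℝ, 0 < ε → ε ≤ εbar →
        ∀ δ c : ℝ, 0 < δ → 0 < c →
          (∀ t₀ : ℝ, 0 ≤ t₀ → ∀ i : Fin n,
            ENNReal.ofReal c ≤
              volume {t : ℝ | t ∈ Set.Icc t₀ (t₀ + δ) ∧ ‖x t - xc i‖ ≤ ε}) →
          ∃ γ Δ : ℝ, 0 < γ ∧ 0 < Δ ∧
            ∀ t : ℝ, 0 ≤ t → ∀ g ∈ Submodule.span ℝ (Set.range fun i => k (xc i)),
              γ * ‖g‖ ^ 2 ≤ ∫ τ in t..(t + Δ), (⟪k (x τ), g⟫) ^ 2 := by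
  obtain ⟨σ, hσ, hcenter⟩ := exists_pos_mul_norm_le_abs_inner_of_mem_span fun i => k (xc i)
  have hk := uniformContinuous_of_inner_eq_radial hφ.continuousAt hker
  obtain ⟨ρ, hρ, hkρ⟩ := Metric.uniformContinuous_iff.1 hk (σ / 2) (by positivity)
  obtain ⟨εbar, hsep, hεbar, hερ⟩ := ((eventually_nhdsGT_lt_half_norm_sub hxc).and
    ((eventually_mem_nhdsWithin (s := Set.Ioi 0)).and
      (nhdsWithin_le_nhds (eventually_lt_nhds hρ)))).exists
  refine ⟨εbar, hεbar, hsep, fun ε hε hεε δ c hδ hc hdwell => ⟨c * (σ / 2) ^ 2, δ, by positivity,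
    hδ, fun t ht g hg => ?_⟩⟩
  rcases eq_or_ne g 0 with rfl | hg0
  · simp
  obtain ⟨i, hi⟩ := hcenter g hg hg0
  have hnear : ∀ τ ∈ {τ | τ ∈ Set.Icc t (t + δ) ∧ ‖x τ - xc i‖ ≤ ε},
      (σ / 2 * ‖g‖) ^ 2 ≤ ⟪k (x τ), g⟫ ^ 2 := by
    rintro τ ⟨-, hτ⟩
    have hkτ : ‖k (x τ) - k (xc i)‖ < σ / 2 := by
      simpa [dist_eq_norm] using hkρ (a := x τ) (b := xc i) (by rw [dist_eq_norm]; linarith)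
    have hlower := abs_inner_sub_norm_mul_le_abs_inner (k (x τ)) (k (xc i)) g
    rw [← sq_abs ⟪k (x τ), g⟫]
    gcongr
    nlinarith [norm_nonneg g, hlower]
  have hS : MeasurableSet {τ | τ ∈ Set.Icc t (t + δ) ∧ ‖x τ - xc i‖ ≤ ε} :=
    (isClosed_Icc.inter (isClosed_le (hx.sub continuous_const).norm continuous_const)).measurableSet
  calc c * (σ / 2) ^ 2 * ‖g‖ ^ 2 = c * (σ / 2 * ‖g‖) ^ 2 := by ring
    _ ≤ ∫ τ in t..(t + δ), ⟪k (x τ), g⟫ ^ 2 :=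
      mul_le_intervalIntegral_of_le_on
        (((hk.continuous.comp hx).inner continuous_const).pow 2).integrableOn_Icc
        (by linarith) (fun _ _ => sq_nonneg _) hS (fun _ h => h.1) (hdwell t ht i) (sq_nonneg _)
        hnear

/-- Sufficient condition for persistence of excitation: for a radial positive-definite
kernel and distinct centers `x_1, …, x_n`, there is `ε̄ < (1/2) min_{i≠j} ‖x_i − x_j‖`
such that if for some `ε ∈ (0, ε̄]` the trajectory dwells in the `ε`-ball around every
center for a uniformly positive amount of time `c` within every window of length `δ`,
then `span {k (x_i)}` is persistently excited in the sense PE2. -/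
theorem sufficient_condition_for_PE {H : Type*} [NormedAddCommGroup H]
    [InnerProductSpace ℝ H] [CompleteSpace H] {d n : ℕ}
    (k : EuclideanSpace ℝ (Fin d) → H)
    (φ : ℝ → ℝ) (hφ : Continuous φ)
    (hker : ∀ y z : EuclideanSpace ℝ (Fin d), ⟪k y, k z⟫ = φ ‖y - z‖)
    (hposdef : ∀ (m : ℕ) (p : Fin m → EuclideanSpace ℝ (Fin d)), Function.Injective p →
      (Matrix.of fun i j => ⟪k (p i), k (p j)⟫).PosDef)
    (xc : Fin n → EuclideanSpace ℝ (Fin d)) (hxc : Function.Injective xc)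
    (x : ℝ → EuclideanSpace ℝ (Fin d)) (hx : Continuous x) :
    ∃ εbar : ℝ, 0 < εbar ∧ (∀ i j, i ≠ j → εbar < ‖xc i - xc j‖ / 2) ∧
      ∀ ε : ℝ, 0 < ε → ε ≤ εbar →
        ∀ δ c : ℝ, 0 < δ → 0 < c →
          (∀ t₀ : ℝ, 0 ≤ t₀ → ∀ i : Fin n,
            ENNReal.ofReal c ≤
              volume {t : ℝ | t ∈ Set.Icc t₀ (t₀ + δ) ∧ ‖x t - xc i‖ ≤ ε}) →
          ∃ γ Δ : ℝ, 0 < γ ∧ 0 < Δ ∧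
            ∀ t : ℝ, 0 ≤ t → ∀ g ∈ Submodule.span ℝ (Set.range fun i => k (xc i)),
              γ * ‖g‖ ^ 2 ≤ ∫ τ in t..(t + Δ), (⟪k (x τ), g⟫) ^ 2 :=
  sufficient_condition_for_PE_general k φ hφ hker xc hxc x hx
end

section
/- Let (x̃, f̃) be a solution of the error system. Then the Lyapunov function V(t) := x̃(t)ᵀ P x̃(t) + Γ ‖f̃(t)‖²_H is differentiable on [0,∞) with V'(t) = −x̃(t)ᵀ Q x̃(t) for all t ≥ 0; in particular V is nonincreasing. -/
open scoped RealInnerProductSpace Matrix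

/-!
Along a solution, `V' = 2⟪P x̃, x̃'⟫ + 2Γ⟪f̃, f̃'⟫`. The Lyapunov equation turns `2⟪P x̃, A x̃⟫`
into `-x̃ᵀ Q x̃`, and the update law for `f̃` is chosen exactly so that the two cross terms
`±2⟪k(x), f̃⟫ Bᵀ P x̃` cancel. Positive semidefiniteness of `Q` then makes `V` nonincreasing.
-/

theorem HasDerivAt.inner_map_self {E : Type*} [NormedAddCommGroup E] [InnerProductSpace ℝ E]
    [FiniteDimensional ℝ E] {T : E →ₗ[ℝ] E} (hT : T.IsSymmetric) {y : ℝ → E} {y' : E} {t : ℝ}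
    (hy : HasDerivAt y y' t) :
    HasDerivAt (fun s => ⟪y s, T (y s)⟫) (2 * ⟪T (y t), y'⟫) t := by
  have hTy : HasDerivAt (fun s => T (y s)) (T y') t :=
    (LinearMap.toContinuousLinearMap T).hasFDerivAt.comp_hasDerivAt t hy
  refine (hy.inner ℝ hTy).congr_deriv ?_
  rw [← hT, real_inner_comm y']
  ring

theorem Matrix.inner_toEuclideanLin_self_of_lyapunov {n : Type*} [Fintype n] [DecidableEq n]
    {A P Q : Matrix n n ℝ} (hP : P.IsHermitian) (hLyap : Aᵀ * P + P * A = -Q)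
    (v : EuclideanSpace ℝ n) :
    ⟪v, Q.toEuclideanLin v⟫ = -(2 * ⟪P.toEuclideanLin v, A.toEuclideanLin v⟫) := by
  have hAdj : ⟪v, Aᵀ.toEuclideanLin (P.toEuclideanLin v)⟫ =
      ⟪P.toEuclideanLin v, A.toEuclideanLin v⟫ := by
    rw [← Matrix.conjTranspose_eq_transpose_of_trivial,
      Matrix.toEuclideanLin_conjTranspose_eq_adjoint, LinearMap.adjoint_inner_right,
      real_inner_comm]
  have hSymm : ⟪v, P.toEuclideanLin (A.toEuclideanLin v)⟫ =
      ⟪P.toEuclideanLin v, A.toEuclideanLin v⟫ :=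
    (Matrix.isSymmetric_toEuclideanLin_iff.mpr hP v _).symm
  rw [← neg_eq_iff_eq_neg.mpr hLyap, map_neg, map_add, Matrix.toLpLin_mul_same,
    Matrix.toLpLin_mul_same]
  simp only [LinearMap.neg_apply, LinearMap.add_apply, LinearMap.comp_apply, inner_neg_right,
    inner_add_right, hAdj, hSymm]
  ring

theorem antitoneOn_Ici_of_hasDerivAt_nonpos {f f' : ℝ → ℝ} {a : ℝ}
    (hf : ∀ x, a ≤ x → HasDerivAt f (f' x) x) (hf' : ∀ x, a < x → f' x ≤ 0) :
    AntitoneOn f (Set.Ici a) := by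
  refine antitoneOn_of_hasDerivWithinAt_nonpos (f' := f') (convex_Ici a)
    (fun x hx => (hf x hx).continuousAt.continuousWithinAt) (fun x hx => ?_) (fun x hx => ?_)
  · rw [interior_Ici] at hx
    exact (hf x hx.le).hasDerivWithinAt
  · rw [interior_Ici] at hx
    exact hf' x hx

theorem lyapunov_derivative_general {H : Type*} [NormedAddCommGroup H]
    [InnerProductSpace ℝ H] {d : ℕ}
    (k : EuclideanSpace ℝ (Fin d) → H)
    (A : Matrix (Fin d) (Fin d) ℝ) (B : EuclideanSpace ℝ (Fin d))
    (Γ : ℝ) (hΓ : 0 < Γ)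
    (P Q : Matrix (Fin d) (Fin d) ℝ) (hP : P.PosDef) (hQ : Q.PosDef)
    (hLyap : Aᵀ * P + P * A = -Q)
    (x : ℝ → EuclideanSpace ℝ (Fin d))
    (xt : ℝ → EuclideanSpace ℝ (Fin d)) (ft : ℝ → H)
    (hxt : ∀ t : ℝ, 0 ≤ t →
      HasDerivAt xt (Matrix.toEuclideanLin A (xt t) + ⟪k (x t), ft t⟫ • B) t)
    (hft : ∀ t : ℝ, 0 ≤ t →
      HasDerivAt ft (-(Γ⁻¹ * ⟪B, Matrix.toEuclideanLin P (xt t)⟫) • k (x t)) t) :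
    (∀ t : ℝ, 0 ≤ t →
      HasDerivAt (fun s => ⟪xt s, Matrix.toEuclideanLin P (xt s)⟫ + Γ * ‖ft s‖ ^ 2)
        (-⟪xt t, Matrix.toEuclideanLin Q (xt t)⟫) t) ∧
    AntitoneOn (fun s => ⟪xt s, Matrix.toEuclideanLin P (xt s)⟫ + Γ * ‖ft s‖ ^ 2)
      (Set.Ici (0 : ℝ)) := by
  have hPsymm := Matrix.isSymmetric_toEuclideanLin_iff.mpr hP.isHermitian
  have hV : ∀ t : ℝ, 0 ≤ t →
      HasDerivAt (fun s => ⟪xt s, Matrix.toEuclideanLin P (xt s)⟫ + Γ * ‖ft s‖ ^ 2)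
        (-⟪xt t, Matrix.toEuclideanLin Q (xt t)⟫) t := by
    intro t ht
    refine (((hxt t ht).inner_map_self hPsymm).add
      ((hft t ht).norm_sq.const_mul Γ)).congr_deriv ?_
    rw [Matrix.inner_toEuclideanLin_self_of_lyapunov hP.isHermitian hLyap]
    simp only [inner_add_right, real_inner_smul_right, real_inner_comm B,
      real_inner_comm (k (x t))]
    field_simp
    ring
  refine ⟨hV, antitoneOn_Ici_of_hasDerivAt_nonpos hV fun t _ => ?_⟩
  exact neg_nonpos.mpr
    ((Matrix.isPositive_toEuclideanLin_iff.mpr hQ.posSemidef).inner_nonneg_right _)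

/-- The Lyapunov function `V(t) = x̃(t)ᵀ P x̃(t) + Γ ‖f̃(t)‖²` of the error system is
differentiable with `V'(t) = −x̃(t)ᵀ Q x̃(t)`; in particular `V` is nonincreasing on
`[0, ∞)`. -/
theorem lyapunov_derivative {H : Type*} [NormedAddCommGroup H]
    [InnerProductSpace ℝ H] [CompleteSpace H] {d : ℕ}
    (k : EuclideanSpace ℝ (Fin d) → H) (hk : Continuous k)
    (A : Matrix (Fin d) (Fin d) ℝ) (B : EuclideanSpace ℝ (Fin d))
    (Γ : ℝ) (hΓ : 0 < Γ)
    (P Q : Matrix (Fin d) (Fin d) ℝ) (hP : P.PosDef) (hQ : Q.PosDef)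
    (hLyap : Aᵀ * P + P * A = -Q)
    (x : ℝ → EuclideanSpace ℝ (Fin d)) (hx : Continuous x)
    (xt : ℝ → EuclideanSpace ℝ (Fin d)) (ft : ℝ → H)
    (hxt : ∀ t : ℝ, 0 ≤ t →
      HasDerivAt xt (Matrix.toEuclideanLin A (xt t) + ⟪k (x t), ft t⟫ • B) t)
    (hft : ∀ t : ℝ, 0 ≤ t →
      HasDerivAt ft (-(Γ⁻¹ * ⟪B, Matrix.toEuclideanLin P (xt t)⟫) • k (x t)) t) :
    (∀ t : ℝ, 0 ≤ t →
      HasDerivAt (fun s => ⟪xt s, Matrix.toEuclideanLin P (xt s)⟫ + Γ * ‖ft s‖ ^ 2)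
        (-⟪xt t, Matrix.toEuclideanLin Q (xt t)⟫) t) ∧
    AntitoneOn (fun s => ⟪xt s, Matrix.toEuclideanLin P (xt s)⟫ + Γ * ‖ft s‖ ^ 2)
      (Set.Ici (0 : ℝ)) :=
  lyapunov_derivative_general k A B Γ hΓ P Q hP hQ hLyap x xt ft hxt hft
end

section
/- Suppose the kernel is uniformly bounded on the diagonal, i.e. ⟪k(y), k(y)⟫_H ≤ k̄² for all y ∈ ℝ^d, and let (x̃, f̃) be a solution of the error system. Then the state error converges to zero: ‖x̃(t)‖_{ℝ^d} → 0 as t → ∞. -/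
/-!
The Lyapunov function `V = x̃ᵀ P x̃ + Γ ‖f̃‖²` has derivative `-x̃ᵀ Q x̃ ≤ 0` along the error
system: the update law for `f̃` is chosen so that the cross terms `2 ⟪k(x), f̃⟫ Bᵀ P x̃` cancel.
Hence `V` is nonincreasing and converges, and `x̃`, `f̃` stay bounded. As the kernel is bounded,
so is `x̃'`, and `x̃ᵀ Q x̃` is Lipschitz on `[0, ∞)`. Barbalat's lemma (a uniformly continuous
function whose primitive converges tends to `0`) gives `x̃ᵀ Q x̃ → 0`, and `Q` is coercive.
-/

open scoped RealInnerProductSpace Matrix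
open Filter Set Topology

theorem LinearMap.exists_pos_mul_norm_sq_le_inner_apply_self {E : Type*} [NormedAddCommGroup E]
    [InnerProductSpace ℝ E] [FiniteDimensional ℝ E] (T : E →ₗ[ℝ] E)
    (hT : ∀ v ≠ 0, 0 < ⟪v, T v⟫) : ∃ c > 0, ∀ v, c * ‖v‖ ^ 2 ≤ ⟪v, T v⟫ := by
  rcases subsingleton_or_nontrivial E with hE | hE
  · exact ⟨1, one_pos, fun v => by simp [Subsingleton.elim v 0]⟩
  obtain ⟨u, hu, hmin⟩ := (isCompact_sphere (0 : E) 1).exists_isMinOn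
    (NormedSpace.sphere_nonempty.mpr zero_le_one)
    (continuous_id.inner (𝕜 := ℝ) T.continuous_of_finiteDimensional).continuousOn
  refine ⟨⟪u, T u⟫, hT u (ne_zero_of_mem_unit_sphere ⟨u, hu⟩), fun v => ?_⟩
  rcases eq_or_ne v 0 with rfl | hv
  · simp
  have hv' : 0 < ‖v‖ := norm_pos_iff.mpr hv
  have : ⟪u, T u⟫ ≤ ⟪‖v‖⁻¹ • v, T (‖v‖⁻¹ • v)⟫ :=
    hmin (a := ‖v‖⁻¹ • v) (by simp [norm_smul, hv'.ne'])
  rw [map_smul, real_inner_smul_left, real_inner_smul_right] at this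
  calc ⟪u, T u⟫ * ‖v‖ ^ 2 ≤ ‖v‖⁻¹ * (‖v‖⁻¹ * ⟪v, T v⟫) * ‖v‖ ^ 2 := by gcongr
    _ = ⟪v, T v⟫ := by field_simp

namespace Matrix

variable {n : Type*} [Fintype n] [DecidableEq n]

theorem inner_toEuclideanLin_transpose (A : Matrix n n ℝ) (u v : EuclideanSpace ℝ n) :
    ⟪u, toEuclideanLin Aᵀ v⟫ = ⟪toEuclideanLin A u, v⟫ := by
  simp [EuclideanSpace.inner_eq_star_dotProduct, toLpLin_apply, dotProduct_mulVec,
    mulVec_transpose]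

theorem inner_toEuclideanLin_transpose_mul_add_mul {A P : Matrix n n ℝ} (hP : P.IsHermitian)
    (v : EuclideanSpace ℝ n) :
    ⟪v, toEuclideanLin (Aᵀ * P + P * A) v⟫ = 2 * ⟪toEuclideanLin A v, toEuclideanLin P v⟫ := by
  rw [map_add, toLpLin_mul_same, toLpLin_mul_same, LinearMap.add_apply, LinearMap.comp_apply,
    LinearMap.comp_apply, inner_add_right, inner_toEuclideanLin_transpose,
    ← isSymmetric_toEuclideanLin_iff.mpr hP, real_inner_comm]
  ring

theorem PosDef.inner_toEuclideanLin_pos {M : Matrix n n ℝ} (hM : M.PosDef)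
    {v : EuclideanSpace ℝ n} (hv : v ≠ 0) : 0 < ⟪v, toEuclideanLin M v⟫ := by
  simpa [EuclideanSpace.inner_eq_star_dotProduct, toLpLin_apply, dotProduct_comm (M *ᵥ _)]
    using hM.dotProduct_mulVec_pos (x := WithLp.ofLp v) (by simpa using hv)

theorem PosDef.exists_pos_mul_norm_sq_le_inner {M : Matrix n n ℝ} (hM : M.PosDef) :
    ∃ c > 0, ∀ v : EuclideanSpace ℝ n, c * ‖v‖ ^ 2 ≤ ⟪v, toEuclideanLin M v⟫ :=
  (toEuclideanLin M).exists_pos_mul_norm_sq_le_inner_apply_self fun _ hv =>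
    hM.inner_toEuclideanLin_pos hv

end Matrix

theorem AntitoneOn.exists_tendsto_atTop_of_forall_le {f : ℝ → ℝ} {a b : ℝ}
    (hf : AntitoneOn f (Ici a)) (hb : ∀ t ∈ Ici a, b ≤ f t) : ∃ l, Tendsto f atTop (𝓝 l) := by
  have hanti : Antitone fun t => f (max t a) := fun s t hst =>
    hf (le_max_right s a) (le_max_right t a) (max_le_max_right a hst)
  refine ⟨_, (tendsto_atTop_ciInf hanti ⟨b, ?_⟩).congr' ?_⟩
  · rintro _ ⟨t, rfl⟩
    exact hb _ (le_max_right t a)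
  · filter_upwards [eventually_ge_atTop a] with t ht
    rw [max_eq_left ht]

theorem tendsto_zero_of_hasDerivAt_of_uniformContinuousOn {V g : ℝ → ℝ} {a l : ℝ}
    (hV : ∀ t ∈ Ici a, HasDerivAt V (g t) t) (hVl : Tendsto V atTop (𝓝 l))
    (hg : UniformContinuousOn g (Ici a)) : Tendsto g atTop (𝓝 0) := by
  rw [Metric.tendsto_atTop]
  intro ε hε
  obtain ⟨δ, hδ, hgδ⟩ := Metric.uniformContinuousOn_iff.mp hg (ε / 2) (half_pos hε)
  have hincr : Tendsto (fun t => V (t + δ / 2) - V t) atTop (𝓝 0) := by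
    simpa using (hVl.comp (tendsto_atTop_add_const_right _ _ tendsto_id)).sub hVl
  obtain ⟨N, hN⟩ := Metric.tendsto_atTop.mp hincr (δ / 2 * (ε / 2)) (by positivity)
  refine ⟨max N a, fun t ht => ?_⟩
  have hta : a ≤ t := le_of_max_le_right ht
  -- the increment of `V` over `[t, t + δ / 2]` is `δ / 2` times a value of `g` near `g t`
  obtain ⟨ξ, ⟨htξ, hξδ⟩, hξ⟩ :=
    exists_hasDerivAt_eq_slope V g (lt_add_of_pos_right t (half_pos hδ))
    (fun u hu => (hV u (hta.trans hu.1)).continuousAt.continuousWithinAt)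
    (fun u hu => hV u (hta.trans hu.1.le))
  have hgξ : |g ξ| < ε / 2 := by
    rw [hξ, add_sub_cancel_left, abs_div, abs_of_pos (half_pos hδ), div_lt_iff₀' (half_pos hδ)]
    simpa [Real.dist_eq] using hN t (le_of_max_le_left ht)
  have hgtξ : dist (g t) (g ξ) < ε / 2 :=
    hgδ t hta ξ (hta.trans htξ.le) (by rw [Real.dist_eq, abs_sub_lt_iff]; constructor <;> linarith)
  calc dist (g t) 0 ≤ dist (g t) (g ξ) + |g ξ| := by
        simpa [Real.dist_eq] using dist_triangle (g t) (g ξ) 0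
    _ < ε := by linarith

theorem lipschitzOnWith_inner_apply_self {F : Type*} [NormedAddCommGroup F]
    [InnerProductSpace ℝ F] (T : F →L[ℝ] F) {x x' : ℝ → F} {s : Set ℝ} {a b : ℝ}
    (hs : Convex ℝ s) (hx : ∀ t ∈ s, HasDerivAt x (x' t) t) (ha : ∀ t ∈ s, ‖x t‖ ≤ a)
    (hb : ∀ t ∈ s, ‖x' t‖ ≤ b) :
    LipschitzOnWith (2 * ‖T‖ * a * b).toNNReal (fun t => ⟪x t, T (x t)⟫) s := by
  refine hs.lipschitzOnWith_of_nnnorm_hasDerivWithin_le (fun t ht =>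
    ((hx t ht).inner ℝ (T.hasFDerivAt.comp_hasDerivAt t (hx t ht))).hasDerivWithinAt)
    fun t ht => ?_
  rw [← NNReal.coe_le_coe, coe_nnnorm]
  refine le_trans ?_ (Real.le_coe_toNNReal _)
  have hxa := ha t ht
  have hx'b := hb t ht
  have ha0 : 0 ≤ a := (norm_nonneg _).trans hxa
  have hb0 : 0 ≤ b := (norm_nonneg _).trans hx'b
  calc ‖⟪x t, T (x' t)⟫ + ⟪x' t, T (x t)⟫‖
      ≤ ‖x t‖ * (‖T‖ * ‖x' t‖) + ‖x' t‖ * (‖T‖ * ‖x t‖) :=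
        norm_add_le_of_le ((norm_inner_le_norm _ _).trans (by gcongr; exact T.le_opNorm _))
          ((norm_inner_le_norm _ _).trans (by gcongr; exact T.le_opNorm _))
    _ ≤ a * (‖T‖ * b) + b * (‖T‖ * a) := by gcongr
    _ = 2 * ‖T‖ * a * b := by ring

theorem tendsto_norm_zero_of_mul_norm_sq_le {E : Type*} [SeminormedAddCommGroup E] {α : Type*}
    {l : Filter α} {x : α → E} {q : α → ℝ} {c : ℝ} (hc : 0 < c)
    (hxq : ∀ a, c * ‖x a‖ ^ 2 ≤ q a) (hq : Tendsto q l (𝓝 0)) :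
    Tendsto (fun a => ‖x a‖) l (𝓝 0) := by
  have hsqrt : Tendsto (fun a => √(q a / c)) l (𝓝 0) := by
    simpa using (hq.div_const c).sqrt
  exact squeeze_zero (fun _ => norm_nonneg _)
    (fun a => Real.le_sqrt_of_sq_le ((le_div_iff₀' hc).2 (hxq a))) hsqrt

section ErrorSystem

variable {H : Type*} [NormedAddCommGroup H] {n : Type*} [Fintype n] [DecidableEq n]

noncomputable def errorLyapunov (P : Matrix n n ℝ) (Γ : ℝ) (xt : ℝ → EuclideanSpace ℝ n)
    (ft : ℝ → H) (t : ℝ) : ℝ :=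
  ⟪xt t, Matrix.toEuclideanLin P (xt t)⟫ + Γ * ‖ft t‖ ^ 2

theorem hasDerivAt_errorLyapunov [InnerProductSpace ℝ H] {A P Q : Matrix n n ℝ}
    {B : EuclideanSpace ℝ n} {Γ : ℝ} {φ : ℝ → H} {xt : ℝ → EuclideanSpace ℝ n} {ft : ℝ → H}
    {t : ℝ} (hP : P.IsHermitian) (hΓ : Γ ≠ 0) (hLyap : Aᵀ * P + P * A = -Q)
    (hxt : HasDerivAt xt (Matrix.toEuclideanLin A (xt t) + ⟪φ t, ft t⟫ • B) t)
    (hft : HasDerivAt ft (-(Γ⁻¹ * ⟪B, Matrix.toEuclideanLin P (xt t)⟫) • φ t) t) :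
    HasDerivAt (errorLyapunov P Γ xt ft) (-⟪xt t, Matrix.toEuclideanLin Q (xt t)⟫) t := by
  have hPx := (Matrix.toEuclideanLin P).toContinuousLinearMap.hasFDerivAt.comp_hasDerivAt t hxt
  refine HasDerivAt.congr_deriv (f := errorLyapunov P Γ xt ft)
    ((hxt.inner ℝ hPx).add (hft.norm_sq.const_mul Γ)) ?_
  have hQ := Matrix.inner_toEuclideanLin_transpose_mul_add_mul (A := A) hP (xt t)
  rw [hLyap, map_neg, LinearMap.neg_apply, inner_neg_right] at hQ
  simp only [LinearMap.coe_toContinuousLinearMap', Function.comp_apply, map_add, map_smul,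
    inner_add_right, real_inner_smul_right,
    ← (Matrix.isSymmetric_toEuclideanLin_iff.mpr hP) (xt t),
    real_inner_comm (Matrix.toEuclideanLin P (xt t)), real_inner_comm (ft t)] at hQ ⊢
  rw [hQ]
  field_simp
  ring

theorem norm_state_le_of_errorLyapunov_le {P : Matrix n n ℝ} {Γ c M t : ℝ}
    {xt : ℝ → EuclideanSpace ℝ n} {ft : ℝ → H} (hc : 0 < c)
    (hPc : ∀ v, c * ‖v‖ ^ 2 ≤ ⟪v, Matrix.toEuclideanLin P v⟫) (hΓ : 0 ≤ Γ)
    (hV : errorLyapunov P Γ xt ft t ≤ M) : ‖xt t‖ ≤ √(M / c) :=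
  Real.le_sqrt_of_sq_le <| (le_div_iff₀' hc).2 <|
    (hPc _).trans <| (le_add_of_nonneg_right (by positivity)).trans hV

theorem norm_param_le_of_errorLyapunov_le {P : Matrix n n ℝ} {Γ M t : ℝ}
    {xt : ℝ → EuclideanSpace ℝ n} {ft : ℝ → H}
    (hP : ∀ v, 0 ≤ ⟪v, Matrix.toEuclideanLin P v⟫) (hΓ : 0 < Γ)
    (hV : errorLyapunov P Γ xt ft t ≤ M) : ‖ft t‖ ≤ √(M / Γ) :=
  Real.le_sqrt_of_sq_le <| (le_div_iff₀' hΓ).2 <| (le_add_of_nonneg_left (hP _)).trans hV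

theorem norm_errorDynamics_le [InnerProductSpace ℝ H] (A : Matrix n n ℝ)
    (B : EuclideanSpace ℝ n) {x : EuclideanSpace ℝ n} {φ f : H} {a b c : ℝ} (hx : ‖x‖ ≤ a)
    (hφ : ‖φ‖ ≤ b) (hf : ‖f‖ ≤ c) :
    ‖Matrix.toEuclideanLin A x + ⟪φ, f⟫ • B‖
      ≤ ‖(Matrix.toEuclideanLin A).toContinuousLinearMap‖ * a + b * c * ‖B‖ := by
  refine norm_add_le_of_le ?_ ?_
  · exact ((Matrix.toEuclideanLin A).toContinuousLinearMap.le_opNorm x).trans (by gcongr)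
  · rw [norm_smul]
    gcongr
    exact (norm_inner_le_norm φ f).trans (by gcongr; exact (norm_nonneg _).trans hφ)

end ErrorSystem

theorem state_error_tendsto_zero_general {H : Type*} [NormedAddCommGroup H]
    [InnerProductSpace ℝ H] {d : ℕ}
    (k : EuclideanSpace ℝ (Fin d) → H)
    (kbar : ℝ) (hkbar : ∀ y, ⟪k y, k y⟫ ≤ kbar ^ 2)
    (A : Matrix (Fin d) (Fin d) ℝ) (B : EuclideanSpace ℝ (Fin d))
    (Γ : ℝ) (hΓ : 0 < Γ)
    (P Q : Matrix (Fin d) (Fin d) ℝ) (hP : P.PosDef) (hQ : Q.PosDef)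
    (hLyap : Aᵀ * P + P * A = -Q)
    (x : ℝ → EuclideanSpace ℝ (Fin d))
    (xt : ℝ → EuclideanSpace ℝ (Fin d)) (ft : ℝ → H)
    (hxt : ∀ t : ℝ, 0 ≤ t →
      HasDerivAt xt (Matrix.toEuclideanLin A (xt t) + ⟪k (x t), ft t⟫ • B) t)
    (hft : ∀ t : ℝ, 0 ≤ t →
      HasDerivAt ft (-(Γ⁻¹ * ⟪B, Matrix.toEuclideanLin P (xt t)⟫) • k (x t)) t) :
    Tendsto (fun t => ‖xt t‖) atTop (nhds 0) := by
  set V := errorLyapunov P Γ xt ft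
  have hV : ∀ t ∈ Ici (0 : ℝ), HasDerivAt V (-⟪xt t, Matrix.toEuclideanLin Q (xt t)⟫) t :=
    fun t ht => hasDerivAt_errorLyapunov (φ := fun s => k (x s)) hP.isHermitian hΓ.ne' hLyap
      (hxt t ht) (hft t ht)
  obtain ⟨cP, hcP, hPc⟩ := hP.exists_pos_mul_norm_sq_le_inner
  obtain ⟨cQ, hcQ, hQc⟩ := hQ.exists_pos_mul_norm_sq_le_inner
  have hPnonneg : ∀ v, 0 ≤ ⟪v, Matrix.toEuclideanLin P v⟫ := fun v =>
    (hPc v).trans' (by positivity)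
  have hVanti : AntitoneOn V (Ici 0) := antitoneOn_of_hasDerivWithinAt_nonpos (convex_Ici 0)
    (fun t ht => (hV t ht).continuousAt.continuousWithinAt)
    (fun t ht => (hV t (interior_subset ht)).hasDerivWithinAt)
    (fun t _ => neg_nonpos.2 ((hQc _).trans' (by positivity)))
  obtain ⟨l, hl⟩ := hVanti.exists_tendsto_atTop_of_forall_le (b := 0) fun t _ =>
    add_nonneg (hPnonneg _) (by positivity)
  have hk_le : ∀ y, ‖k y‖ ≤ |kbar| := fun y => by
    simpa using sq_le_sq.1 ((real_inner_self_eq_norm_sq (k y)).symm.trans_le (hkbar y))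
  have hxb : ∀ t ∈ Ici 0, ‖xt t‖ ≤ √(V 0 / cP) := fun t ht =>
    norm_state_le_of_errorLyapunov_le hcP hPc hΓ.le (hVanti self_mem_Ici ht ht)
  have hfb : ∀ t ∈ Ici 0, ‖ft t‖ ≤ √(V 0 / Γ) := fun t ht =>
    norm_param_le_of_errorLyapunov_le hPnonneg hΓ (hVanti self_mem_Ici ht ht)
  have hQlip := lipschitzOnWith_inner_apply_self (Matrix.toEuclideanLin Q).toContinuousLinearMap
    (x' := fun t => Matrix.toEuclideanLin A (xt t) + ⟪k (x t), ft t⟫ • B) (convex_Ici 0) hxt hxb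
    fun t ht => norm_errorDynamics_le A B (hxb t ht) (hk_le _) (hfb t ht)
  have hQform := tendsto_zero_of_hasDerivAt_of_uniformContinuousOn (V := -V)
    (fun t ht => by simpa using (hV t ht).neg) hl.neg hQlip.uniformContinuousOn
  exact tendsto_norm_zero_of_mul_norm_sq_le hcQ (fun t => hQc (xt t)) hQform

/-- If the kernel is uniformly bounded on the diagonal, the state error of the error
system converges to zero: `‖x̃(t)‖ → 0` as `t → ∞`. -/
theorem state_error_tendsto_zero {H : Type*} [NormedAddCommGroup H]
    [InnerProductSpace ℝ H] [CompleteSpace H] {d : ℕ}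
    (k : EuclideanSpace ℝ (Fin d) → H) (hk : Continuous k)
    (kbar : ℝ) (hkbar : ∀ y, ⟪k y, k y⟫ ≤ kbar ^ 2)
    (A : Matrix (Fin d) (Fin d) ℝ) (B : EuclideanSpace ℝ (Fin d))
    (Γ : ℝ) (hΓ : 0 < Γ)
    (P Q : Matrix (Fin d) (Fin d) ℝ) (hP : P.PosDef) (hQ : Q.PosDef)
    (hLyap : Aᵀ * P + P * A = -Q)
    (x : ℝ → EuclideanSpace ℝ (Fin d)) (hx : Continuous x)
    (xt : ℝ → EuclideanSpace ℝ (Fin d)) (ft : ℝ → H)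
    (hxt : ∀ t : ℝ, 0 ≤ t →
      HasDerivAt xt (Matrix.toEuclideanLin A (xt t) + ⟪k (x t), ft t⟫ • B) t)
    (hft : ∀ t : ℝ, 0 ≤ t →
      HasDerivAt ft (-(Γ⁻¹ * ⟪B, Matrix.toEuclideanLin P (xt t)⟫) • k (x t)) t) :
    Tendsto (fun t => ‖xt t‖) atTop (nhds 0) :=
  state_error_tendsto_zero_general k kbar hkbar A B Γ hΓ P Q hP hQ hLyap x xt ft hxt hft
end

section
/- Let (x̃, f̃) be a solution of the error system. Then for every T ≥ 0, ∫_0^T x̃(τ)ᵀ Q x̃(τ) dτ ≤ x̃(0)ᵀ P x̃(0) + Γ ‖f̃(0)‖²_H; in particular the nonnegative function t ↦ x̃(t)ᵀ Q x̃(t) is integrable on [0,∞). -/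
open scoped RealInnerProductSpace Matrix
open Filter MeasureTheory Set

/-!
Along a solution, `V(t) = x̃ᵀ P x̃ + Γ ‖f̃‖²` satisfies `V' = -x̃ᵀ Q x̃`: the Lyapunov equation turns
the drift `A x̃` into `-x̃ᵀ Q x̃`, and the choice of the adaptation law `f̃'` makes the two cross
terms `±2 ⟪k(x), f̃⟫ Bᵀ P x̃` cancel. Integrating, `∫₀ᵀ x̃ᵀ Q x̃ = V(0) - V(T) ≤ V(0)` since `V ≥ 0`,
and a nonnegative function with uniformly bounded integrals over `[0, T]` is integrable on `[0, ∞)`.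
-/

namespace Matrix

variable {n : Type*} [Fintype n] [DecidableEq n]

theorem inner_toEuclideanLin_left (M : Matrix n n ℝ) (u w : EuclideanSpace ℝ n) :
    ⟪toEuclideanLin M u, w⟫ = ⟪u, toEuclideanLin Mᵀ w⟫ := by
  rw [← conjTranspose_eq_transpose_of_trivial, toEuclideanLin_conjTranspose_eq_adjoint,
    LinearMap.adjoint_inner_right]

theorem PosSemidef.inner_toEuclideanLin_self_nonneg {M : Matrix n n ℝ} (hM : M.PosSemidef)
    (v : EuclideanSpace ℝ n) : 0 ≤ ⟪v, toEuclideanLin M v⟫ :=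
  (isPositive_toEuclideanLin_iff.mpr hM).inner_nonneg_right v

theorem IsHermitian.hasDerivAt_inner_toEuclideanLin_self {P : Matrix n n ℝ} (hP : P.IsHermitian)
    {x : ℝ → EuclideanSpace ℝ n} {x' : EuclideanSpace ℝ n} {t : ℝ} (hx : HasDerivAt x x' t) :
    HasDerivAt (fun τ => ⟪x τ, toEuclideanLin P (x τ)⟫) (2 * ⟪x', toEuclideanLin P (x t)⟫) t := by
  have hPx : HasDerivAt (fun τ => toEuclideanLin P (x τ)) (toEuclideanLin P x') t :=
    (toEuclideanLin P).toContinuousLinearMap.hasFDerivAt.comp_hasDerivAt t hx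
  refine (hx.inner ℝ hPx).congr_deriv ?_
  rw [← (isSymmetric_toEuclideanLin_iff.mpr hP) x', real_inner_comm]
  ring

theorem two_mul_inner_toEuclideanLin_of_lyapunov {A P Q : Matrix n n ℝ} (hP : P.IsHermitian)
    (hLyap : Aᵀ * P + P * A = -Q) (v : EuclideanSpace ℝ n) :
    2 * ⟪toEuclideanLin A v, toEuclideanLin P v⟫ = -⟪v, toEuclideanLin Q v⟫ := by
  have h := congrArg (fun M => ⟪v, toEuclideanLin M v⟫) hLyap
  simp only [map_add, map_neg, LinearMap.add_apply, LinearMap.neg_apply, inner_add_right,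
    inner_neg_right, toLpLin_mul_same, LinearMap.comp_apply] at h
  have hAP : ⟪v, toEuclideanLin Aᵀ (toEuclideanLin P v)⟫ =
      ⟪toEuclideanLin A v, toEuclideanLin P v⟫ := (inner_toEuclideanLin_left _ _ _).symm
  have hPA : ⟪v, toEuclideanLin P (toEuclideanLin A v)⟫ =
      ⟪toEuclideanLin A v, toEuclideanLin P v⟫ := by
    rw [← (isSymmetric_toEuclideanLin_iff.mpr hP), real_inner_comm]
  linarith

end Matrix

open Matrix

theorem hasDerivAt_errorSystem_lyapunov {n H : Type*} [Fintype n] [DecidableEq n]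
    [NormedAddCommGroup H] [InnerProductSpace ℝ H] {A P Q : Matrix n n ℝ}
    (hP : P.IsHermitian) (hLyap : Aᵀ * P + P * A = -Q) {Γ : ℝ} (hΓ : Γ ≠ 0)
    {B : EuclideanSpace ℝ n} {h : H} {xt : ℝ → EuclideanSpace ℝ n} {ft : ℝ → H} {t : ℝ}
    (hxt : HasDerivAt xt (toEuclideanLin A (xt t) + ⟪h, ft t⟫ • B) t)
    (hft : HasDerivAt ft (-(Γ⁻¹ * ⟪B, toEuclideanLin P (xt t)⟫) • h) t) :
    HasDerivAt (fun τ => ⟪xt τ, toEuclideanLin P (xt τ)⟫ + Γ * ‖ft τ‖ ^ 2)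
      (-⟪xt t, toEuclideanLin Q (xt t)⟫) t := by
  refine ((hP.hasDerivAt_inner_toEuclideanLin_self hxt).add
    (hft.norm_sq.const_mul Γ)).congr_deriv ?_
  rw [← two_mul_inner_toEuclideanLin_of_lyapunov hP hLyap, inner_add_left, real_inner_smul_left,
    real_inner_smul_right, real_inner_comm h]
  field_simp
  ring

theorem integral_le_of_hasDerivAt_neg {V g : ℝ → ℝ} {a b : ℝ} (hab : a ≤ b)
    (hV : ∀ t ∈ Icc a b, HasDerivAt V (-g t) t) (hg : ContinuousOn g (Icc a b))
    (hVb : 0 ≤ V b) : ∫ τ in a..b, g τ ≤ V a := by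
  have hint : IntervalIntegrable (fun τ => -g τ) volume a b :=
    (hg.neg.mono (uIcc_of_le hab).le).intervalIntegrable
  have hFTC := intervalIntegral.integral_eq_sub_of_hasDerivAt
    (fun t ht => hV t ((uIcc_of_le hab) ▸ ht)) hint
  rw [intervalIntegral.integral_neg] at hFTC
  linarith

theorem integrableOn_Ici_of_hasDerivAt_neg {V g : ℝ → ℝ} {a : ℝ}
    (hV : ∀ t ∈ Ici a, HasDerivAt V (-g t) t) (hg : ContinuousOn g (Ici a))
    (hV0 : ∀ t ∈ Ici a, 0 ≤ V t) (hg0 : ∀ t ∈ Ici a, 0 ≤ g t) : IntegrableOn g (Ici a) := by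
  rw [integrableOn_Ici_iff_integrableOn_Ioi]
  refine integrableOn_Ioi_of_intervalIntegral_norm_bounded (V a) a
    (fun b => (hg.mono Icc_subset_Ici_self).integrableOn_Icc.mono_set Ioc_subset_Icc_self)
    tendsto_id ?_
  filter_upwards [eventually_ge_atTop a] with b hab
  have hIcc : Icc a b ⊆ Ici a := Icc_subset_Ici_self
  rw [id, intervalIntegral.integral_congr fun t ht =>
    Real.norm_of_nonneg (hg0 t (hIcc ((uIcc_of_le hab) ▸ ht)))]
  exact integral_le_of_hasDerivAt_neg hab (fun t ht => hV t (hIcc ht)) (hg.mono hIcc)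
    (hV0 b hab)

theorem error_system_integral_bound_general {H : Type*} [NormedAddCommGroup H]
    [InnerProductSpace ℝ H] {d : ℕ}
    (k : EuclideanSpace ℝ (Fin d) → H)
    (A : Matrix (Fin d) (Fin d) ℝ) (B : EuclideanSpace ℝ (Fin d))
    (Γ : ℝ) (hΓ : 0 < Γ)
    (P Q : Matrix (Fin d) (Fin d) ℝ) (hP : P.PosDef) (hQ : Q.PosDef)
    (hLyap : Aᵀ * P + P * A = -Q)
    (x : ℝ → EuclideanSpace ℝ (Fin d))
    (xt : ℝ → EuclideanSpace ℝ (Fin d)) (ft : ℝ → H)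
    (hxt : ∀ t : ℝ, 0 ≤ t →
      HasDerivAt xt (Matrix.toEuclideanLin A (xt t) + ⟪k (x t), ft t⟫ • B) t)
    (hft : ∀ t : ℝ, 0 ≤ t →
      HasDerivAt ft (-(Γ⁻¹ * ⟪B, Matrix.toEuclideanLin P (xt t)⟫) • k (x t)) t) :
    (∀ T : ℝ, 0 ≤ T →
      ∫ τ in (0 : ℝ)..T, ⟪xt τ, Matrix.toEuclideanLin Q (xt τ)⟫ ≤
        ⟪xt 0, Matrix.toEuclideanLin P (xt 0)⟫ + Γ * ‖ft 0‖ ^ 2) ∧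
    IntegrableOn (fun τ => ⟪xt τ, Matrix.toEuclideanLin Q (xt τ)⟫)
      (Set.Ici (0 : ℝ)) := by
  set V : ℝ → ℝ := fun τ => ⟪xt τ, toEuclideanLin P (xt τ)⟫ + Γ * ‖ft τ‖ ^ 2
  have hV : ∀ t ∈ Ici (0 : ℝ), HasDerivAt V (-⟪xt t, toEuclideanLin Q (xt t)⟫) t :=
    fun t ht => hasDerivAt_errorSystem_lyapunov hP.isHermitian hLyap hΓ.ne' (hxt t ht) (hft t ht)
  have hV_nonneg : ∀ t, 0 ≤ V t := fun t =>
    add_nonneg (hP.posSemidef.inner_toEuclideanLin_self_nonneg _) (by positivity)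
  have hxt_cont : ContinuousOn xt (Ici 0) := fun t ht =>
    (hxt t ht).continuousAt.continuousWithinAt
  have hQ_cont : ContinuousOn (fun τ => ⟪xt τ, toEuclideanLin Q (xt τ)⟫) (Ici 0) :=
    hxt_cont.inner ((toEuclideanLin Q).continuous_of_finiteDimensional.comp_continuousOn hxt_cont)
  refine ⟨fun T hT => ?_, integrableOn_Ici_of_hasDerivAt_neg hV hQ_cont (fun t _ => hV_nonneg t)
    fun t _ => hQ.posSemidef.inner_toEuclideanLin_self_nonneg _⟩
  exact integral_le_of_hasDerivAt_neg hT (fun t ht => hV t ht.1) (hQ_cont.mono Icc_subset_Ici_self)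
    (hV_nonneg T)

/-- Integrating the Lyapunov identity: for every `T ≥ 0`,
`∫_0^T x̃(τ)ᵀ Q x̃(τ) dτ ≤ x̃(0)ᵀ P x̃(0) + Γ ‖f̃(0)‖²`; in particular the nonnegative
function `t ↦ x̃(t)ᵀ Q x̃(t)` is integrable on `[0, ∞)`. -/
theorem error_system_integral_bound {H : Type*} [NormedAddCommGroup H]
    [InnerProductSpace ℝ H] [CompleteSpace H] {d : ℕ}
    (k : EuclideanSpace ℝ (Fin d) → H) (hk : Continuous k)
    (A : Matrix (Fin d) (Fin d) ℝ) (B : EuclideanSpace ℝ (Fin d))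
    (Γ : ℝ) (hΓ : 0 < Γ)
    (P Q : Matrix (Fin d) (Fin d) ℝ) (hP : P.PosDef) (hQ : Q.PosDef)
    (hLyap : Aᵀ * P + P * A = -Q)
    (x : ℝ → EuclideanSpace ℝ (Fin d)) (hx : Continuous x)
    (xt : ℝ → EuclideanSpace ℝ (Fin d)) (ft : ℝ → H)
    (hxt : ∀ t : ℝ, 0 ≤ t →
      HasDerivAt xt (Matrix.toEuclideanLin A (xt t) + ⟪k (x t), ft t⟫ • B) t)
    (hft : ∀ t : ℝ, 0 ≤ t →
      HasDerivAt ft (-(Γ⁻¹ * ⟪B, Matrix.toEuclideanLin P (xt t)⟫) • k (x t)) t) :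
    (∀ T : ℝ, 0 ≤ T →
      ∫ τ in (0 : ℝ)..T, ⟪xt τ, Matrix.toEuclideanLin Q (xt τ)⟫ ≤
        ⟪xt 0, Matrix.toEuclideanLin P (xt 0)⟫ + Γ * ‖ft 0‖ ^ 2) ∧
    IntegrableOn (fun τ => ⟪xt τ, Matrix.toEuclideanLin Q (xt τ)⟫)
      (Set.Ici (0 : ℝ)) :=
  error_system_integral_bound_general k A B Γ hΓ P Q hP hQ hLyap x xt ft hxt hft
end
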